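/- arXiv:0803.4101 — 8 statements merged into one kernel-verified Lean document; each statement's English description precedes it below -/
import Mathlib

section
/- For any x in ℝ, the integral over ℝ of (1 - cos(t·x))/t² dt equals π·|x|. -/
/-!
Write `1 / t² = ∫₀^∞ s e^{-st} ds`. The Laplace transform of `1 - cos` is
`1 / (s (1 + s²))`, so by Tonelli–Fubini
`∫₀^∞ (1 - cos t) / t² dt = ∫₀^∞ ds / (1 + s²) = π / 2`.
Evenness gives `π` on the whole line, and the substitution `u = t x` gives the factor `|x|`.
-/

open MeasureTheory Real Set

theorem integral_cos_mul_exp_neg_mul_Ioi {s : ℝ} (hs : 0 < s) :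
    ∫ t in Ioi 0, cos t * exp (-(s * t)) = s / (1 + s ^ 2) := by
  have ha : (-s + Complex.I).re < 0 := by simpa using hs
  have hre (t : ℝ) :
      cos t * exp (-(s * t)) = RCLike.re (Complex.exp ((-s + Complex.I) * t)) := by
    simp [Complex.exp_re, mul_comm]
  simp_rw [hre]
  rw [integral_re (integrableOn_exp_mul_complex_Ioi ha 0), integral_exp_mul_complex_Ioi ha 0]
  simp [Complex.div_re, Complex.normSq, sq, add_comm]

theorem integrableOn_one_sub_cos_mul_exp_neg_mul_Ioi {s : ℝ} (hs : 0 < s) :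
    IntegrableOn (fun t => (1 - cos t) * exp (-(s * t))) (Ioi 0) := by
  refine ((exp_neg_integrableOn_Ioi 0 hs).const_mul 2).mono'
    (Continuous.aestronglyMeasurable (by fun_prop)) (ae_of_all _ fun t => ?_)
  rw [norm_mul, norm_of_nonneg (exp_pos _).le, neg_mul]
  gcongr
  rw [Real.norm_eq_abs, abs_le]
  constructor <;> linarith [cos_le_one t, neg_one_le_cos t]

theorem integral_one_sub_cos_mul_exp_neg_mul_Ioi {s : ℝ} (hs : 0 < s) :
    ∫ t in Ioi 0, (1 - cos t) * exp (-(s * t)) = 1 / (s * (1 + s ^ 2)) := by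
  have hexp : IntegrableOn (fun t => exp (-(s * t))) (Ioi 0) := by
    simpa only [neg_mul] using exp_neg_integrableOn_Ioi 0 hs
  have hcos : IntegrableOn (fun t => cos t * exp (-(s * t))) (Ioi 0) := by
    refine (hexp.sub (integrableOn_one_sub_cos_mul_exp_neg_mul_Ioi hs)).congr_fun
      (fun t _ => ?_) measurableSet_Ioi
    simp only [Pi.sub_apply]
    ring
  simp_rw [sub_mul, one_mul]
  rw [integral_sub hexp hcos, integral_cos_mul_exp_neg_mul_Ioi hs]
  have hexp_integral := integral_exp_mul_Ioi (a := -s) (by linarith) 0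
  simp only [neg_mul, mul_zero, exp_zero] at hexp_integral
  rw [hexp_integral]
  field_simp
  ring

theorem integral_mul_exp_neg_mul_Ioi {t : ℝ} (ht : 0 < t) :
    ∫ s in Ioi 0, s * exp (-(s * t)) = (t ^ 2)⁻¹ := by
  have h := integral_rpow_mul_exp_neg_mul_Ioi two_pos ht
  norm_num [mul_comm t] at h
  simpa using h

theorem integral_Ioi_one_sub_cos_div_sq : ∫ t in Ioi 0, (1 - cos t) / t ^ 2 = π / 2 := by
  set f : ℝ → ℝ → ℝ := fun s t => (1 - cos t) * (s * exp (-(s * t)))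
  have hf_nonneg {s t : ℝ} (hs : 0 < s) : 0 ≤ f s t := by
    have := cos_le_one t
    positivity
  have hf_inner {s : ℝ} (hs : 0 < s) : ∫ t in Ioi 0, f s t = (1 + s ^ 2)⁻¹ := by
    simp only [f, mul_left_comm _ s, integral_const_mul,
      integral_one_sub_cos_mul_exp_neg_mul_Ioi hs]
    field_simp
  have hf_int : Integrable (Function.uncurry f)
      ((volume.restrict (Ioi 0)).prod (volume.restrict (Ioi 0))) := by
    refine (integrable_prod_iff (Continuous.aestronglyMeasurable (by fun_prop))).2 ⟨?_, ?_⟩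
    · filter_upwards [ae_restrict_mem measurableSet_Ioi] with s hs
      refine ((integrableOn_one_sub_cos_mul_exp_neg_mul_Ioi hs).const_mul s).congr
        (ae_of_all _ fun t => ?_)
      simp only [f, Function.uncurry_apply_pair]
      ring
    · refine integrable_inv_one_add_sq.integrableOn.congr ?_
      filter_upwards [ae_restrict_mem measurableSet_Ioi] with s hs
      rw [← hf_inner hs]
      refine setIntegral_congr_fun measurableSet_Ioi fun t _ => ?_
      exact (norm_of_nonneg (hf_nonneg hs)).symm
  calc ∫ t in Ioi 0, (1 - cos t) / t ^ 2
      = ∫ t in Ioi 0, ∫ s in Ioi 0, f s t :=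
        setIntegral_congr_fun measurableSet_Ioi fun t ht => by
          rw [integral_const_mul, integral_mul_exp_neg_mul_Ioi ht, div_eq_mul_inv]
    _ = ∫ s in Ioi 0, ∫ t in Ioi 0, f s t := (integral_integral_swap hf_int).symm
    _ = ∫ s in Ioi 0, (1 + s ^ 2)⁻¹ :=
        setIntegral_congr_fun measurableSet_Ioi fun s hs => hf_inner hs
    _ = π / 2 := by simp

theorem integral_one_sub_cos_div_sq_eq_pi : ∫ t, (1 - cos t) / t ^ 2 = π := by
  have h := integral_comp_abs (f := fun t => (1 - cos t) / t ^ 2)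
  simp only [cos_abs, sq_abs, integral_Ioi_one_sub_cos_div_sq] at h
  linarith

/-- For any `x ∈ ℝ`, `∫_ℝ (1 - cos(t x))/t² dt = π |x|`. -/
theorem integral_one_sub_cos_div_sq (x : ℝ) :
    (∫ t : ℝ, (1 - Real.cos (t * x)) / t ^ 2) = Real.pi * |x| := by
  rcases eq_or_ne x 0 with rfl | hx
  · simp
  have hscale (t : ℝ) :
      (1 - cos (t * x)) / t ^ 2 = x ^ 2 * ((1 - cos (t * x)) / (t * x) ^ 2) := by
    rcases eq_or_ne t 0 with rfl | ht
    · simp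
    field_simp
  simp_rw [hscale]
  rw [integral_const_mul, Measure.integral_comp_mul_right (fun u => (1 - cos u) / u ^ 2),
    integral_one_sub_cos_div_sq_eq_pi, smul_eq_mul, abs_inv, ← sq_abs]
  field_simp
end

section
/- Let X ∈ ℝ^p and Y ∈ ℝ^q be random vectors with joint characteristic function f_{X,Y} and marginals f_X, f_Y. Then for all t ∈ ℝ^p, s ∈ ℝ^q: |f_{X,Y}(t,s) - f_X(t)·f_Y(s)|² ≤ (1 - |f_X(t)|²)·(1 - |f_Y(s)|²). -/
/-!
With `U = exp(i⟨t,X⟩) - f_X(t)` and `V = exp(i⟨s,Y⟩) - f_Y(s)` one has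
`f_{X,Y}(t,s) - f_X(t) f_Y(s) = E[UV]`, so Cauchy–Schwarz bounds its square by `E|U|² E|V|²`.
Since `exp(i⟨t,X⟩)` has modulus one, `E|U|² = 1 - |f_X(t)|²`, and likewise for `V`.
-/

open MeasureTheory Complex

section Covariance

variable {Ω : Type*} [MeasurableSpace Ω] {μ : Measure Ω}

theorem norm_integral_mul_sq_le {𝕜 : Type*} [RCLike 𝕜] {f g : Ω → 𝕜}
    (hf : MemLp f 2 μ) (hg : MemLp g 2 μ) :
    ‖∫ ω, f ω * g ω ∂μ‖ ^ 2 ≤ (∫ ω, ‖f ω‖ ^ 2 ∂μ) * ∫ ω, ‖g ω‖ ^ 2 ∂μ := by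
  have holder := integral_mul_norm_le_Lp_mul_Lq (μ := μ) Real.HolderConjugate.two_two
    (by simpa using hf) (by simpa using hg)
  simp only [Real.rpow_two, ← Real.sqrt_eq_rpow] at holder
  have hnorm : ‖∫ ω, f ω * g ω ∂μ‖ ≤ ∫ ω, ‖f ω‖ * ‖g ω‖ ∂μ :=
    (norm_integral_le_integral_norm _).trans_eq (by simp_rw [norm_mul])
  calc ‖∫ ω, f ω * g ω ∂μ‖ ^ 2
      ≤ (√(∫ ω, ‖f ω‖ ^ 2 ∂μ) * √(∫ ω, ‖g ω‖ ^ 2 ∂μ)) ^ 2 := by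
        gcongr
        exact hnorm.trans holder
    _ = (∫ ω, ‖f ω‖ ^ 2 ∂μ) * ∫ ω, ‖g ω‖ ^ 2 ∂μ := by
        rw [mul_pow, Real.sq_sqrt (by positivity), Real.sq_sqrt (by positivity)]

theorem memLp_exp_ofReal_mul_I [IsFiniteMeasure μ] {a : Ω → ℝ} (ha : AEMeasurable a μ)
    (p : ENNReal) :
    MemLp (fun ω => exp (a ω * I)) p μ :=
  MemLp.of_bound (by fun_prop) 1 (.of_forall fun ω => (norm_exp_ofReal_mul_I _).le)

variable [IsProbabilityMeasure μ]

theorem integral_norm_sub_integral_sq {E : Type*} [NormedAddCommGroup E] [InnerProductSpace ℝ E]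
    [CompleteSpace E] {f : Ω → E} (hf : MemLp f 2 μ) :
    ∫ ω, ‖f ω - ∫ x, f x ∂μ‖ ^ 2 ∂μ = (∫ ω, ‖f ω‖ ^ 2 ∂μ) - ‖∫ ω, f ω ∂μ‖ ^ 2 := by
  set m := ∫ x, f x ∂μ
  have hsq : Integrable (fun ω => ‖f ω‖ ^ 2) μ := hf.integrable_norm_pow two_ne_zero
  have hinner : Integrable (fun ω => 2 * inner ℝ m (f ω)) μ :=
    ((hf.integrable one_le_two).const_inner m).const_mul 2
  have hdiff : Integrable (fun ω => ‖f ω‖ ^ 2 - 2 * inner ℝ m (f ω)) μ := hsq.sub hinner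
  simp_rw [norm_sub_sq_real, real_inner_comm m]
  rw [integral_add hdiff (integrable_const _), integral_sub hsq hinner,
    integral_const_mul, integral_inner (hf.integrable one_le_two), real_inner_self_eq_norm_sq,
    integral_const, probReal_univ, one_smul]
  ring

theorem integral_sub_integral_mul_sub_integral {𝕜 : Type*} [RCLike 𝕜] {f g : Ω → 𝕜}
    (hf : Integrable f μ) (hg : Integrable g μ) (hfg : Integrable (fun ω => f ω * g ω) μ) :
    ∫ ω, (f ω - ∫ x, f x ∂μ) * (g ω - ∫ x, g x ∂μ) ∂μ
      = ∫ ω, f ω * g ω ∂μ - (∫ ω, f ω ∂μ) * ∫ ω, g ω ∂μ := by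
  set a := ∫ x, f x ∂μ
  set b := ∫ x, g x ∂μ
  have hexpand : ∀ ω, (f ω - a) * (g ω - b) = f ω * g ω - b * f ω - a * g ω + a * b :=
    fun ω => by ring
  have h₁ : Integrable (fun ω => f ω * g ω - b * f ω) μ := hfg.sub (hf.const_mul b)
  have h₂ : Integrable (fun ω => f ω * g ω - b * f ω - a * g ω) μ := h₁.sub (hg.const_mul a)
  simp_rw [hexpand]
  rw [integral_add h₂ (integrable_const _), integral_sub h₁ (hg.const_mul a),
    integral_sub hfg (hf.const_mul b), integral_const_mul, integral_const_mul, integral_const,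
    probReal_univ, one_smul]
  ring

theorem norm_integral_mul_sub_sq_le {𝕜 : Type*} [RCLike 𝕜] {f g : Ω → 𝕜}
    (hf : MemLp f 2 μ) (hg : MemLp g 2 μ) :
    ‖∫ ω, f ω * g ω ∂μ - (∫ ω, f ω ∂μ) * ∫ ω, g ω ∂μ‖ ^ 2
      ≤ ((∫ ω, ‖f ω‖ ^ 2 ∂μ) - ‖∫ ω, f ω ∂μ‖ ^ 2) *
        ((∫ ω, ‖g ω‖ ^ 2 ∂μ) - ‖∫ ω, g ω ∂μ‖ ^ 2) := by
  rw [← integral_sub_integral_mul_sub_integral (hf.integrable one_le_two)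
      (hg.integrable one_le_two) (hf.integrable_mul hg), ← integral_norm_sub_integral_sq hf,
    ← integral_norm_sub_integral_sq hg]
  exact norm_integral_mul_sq_le (hf.sub (memLp_const _)) (hg.sub (memLp_const _))

end Covariance

/-- `|f_{X,Y}(t,s) - f_X(t) f_Y(s)|² ≤ (1 - |f_X(t)|²)(1 - |f_Y(s)|²)`. -/
theorem charFun_cov_bound {Ω : Type*} [MeasureSpace Ω] [IsProbabilityMeasure (volume : Measure Ω)]
    (p q : ℕ) (X : Ω → EuclideanSpace ℝ (Fin p)) (Y : Ω → EuclideanSpace ℝ (Fin q))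
    (hX : Measurable X) (hY : Measurable Y)
    (t : EuclideanSpace ℝ (Fin p)) (s : EuclideanSpace ℝ (Fin q)) :
    ‖(∫ ω, Complex.exp (((inner ℝ t (X ω) : ℝ) + (inner ℝ s (Y ω) : ℝ)) * Complex.I))
        - (∫ ω, Complex.exp ((inner ℝ t (X ω) : ℝ) * Complex.I))
          * (∫ ω, Complex.exp ((inner ℝ s (Y ω) : ℝ) * Complex.I))‖ ^ 2 ≤
      (1 - ‖∫ ω, Complex.exp ((inner ℝ t (X ω) : ℝ) * Complex.I)‖ ^ 2) *
      (1 - ‖∫ ω, Complex.exp ((inner ℝ s (Y ω) : ℝ) * Complex.I)‖ ^ 2) := by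
  have hf := memLp_exp_ofReal_mul_I (a := fun ω => inner ℝ t (X ω))
    (measurable_const.inner hX).aemeasurable (μ := volume) 2
  have hg := memLp_exp_ofReal_mul_I (a := fun ω => inner ℝ s (Y ω))
    (measurable_const.inner hY).aemeasurable (μ := volume) 2
  simpa [add_mul, exp_add, norm_exp_ofReal_mul_I] using norm_integral_mul_sub_sq_le hf hg
end

section
/- For a random vector X in ℝ^p with E|X| < ∞ and characteristic function f_X, and X' an independent copy of X: ∫_{ℝ^p} (1 - |f_X(t)|²)/(c_p |t|^{1+p}) dt = E|X - X'|, where c_p = π^{(1+p)/2}/Γ((1+p)/2). -/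
/-!
Let `n` be the dimension and `q = n + 1`. Subordinating
`‖t‖⁻ᵠ = Γ(q/2)⁻¹ ∫₀^∞ s^(q/2 - 1) e^(-s‖t‖²) ds` and integrating in `t` first, the Gaussian
integral `∫ e^(-s‖t‖²) (1 - cos ⟪t, z⟫) dt = (π/s)^(n/2) (1 - e^(-‖z‖²/4s))` turns
`∫ (1 - cos ⟪t, z⟫) / ‖t‖ᵠ dt` into `π^(n/2) / Γ(q/2) · ∫₀^∞ s^(-1/2) (1 - e^(-c/s)) ds` with
`c = ‖z‖²/4`. After `s ↦ 1/s` and `1 - e^(-cu) = u ∫₀^c e^(-vu) dv`, the last integral is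
`2 √(π c) = √π ‖z‖`, so `∫ (1 - cos ⟪t, z⟫) / ‖t‖ᵠ dt = π^(q/2) / Γ(q/2) · ‖z‖`.

Since `1 - |f_X(t)|² = E[1 - cos ⟪t, X - X'⟫]`, the theorem follows by exchanging the expectation
with the `t`-integral; all integrands are nonnegative, so Tonelli's theorem justifies every
exchange of integrals.
-/

open MeasureTheory Real Set Module
open scoped InnerProductSpace

lemma lintegral_Ioi_comp_inv (g : ℝ → ENNReal) :
    ∫⁻ x in Ioi (0:ℝ), g x = ∫⁻ x in Ioi 0, ENNReal.ofReal ((x ^ 2)⁻¹) * g x⁻¹ := by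
  have himage : Inv.inv '' Ioi (0:ℝ) = Ioi 0 := by
    rw [image_inv_eq_inv]; ext; simp
  have hderiv : ∀ x ∈ Ioi (0:ℝ), HasDerivWithinAt Inv.inv (-(x ^ 2)⁻¹) (Ioi 0) x :=
    fun x hx => (hasDerivAt_inv (ne_of_gt hx)).hasDerivWithinAt
  conv_lhs => rw [← himage]
  rw [lintegral_image_eq_lintegral_abs_deriv_mul measurableSet_Ioi hderiv inv_injective.injOn]
  simp only [abs_neg, abs_inv, abs_pow, sq_abs]

lemma integral_exp_neg_mul (u c : ℝ) (hu : u ≠ 0) :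
    ∫ v in (0:ℝ)..c, exp (-(u * v)) = u⁻¹ * (1 - exp (-(u * c))) := by
  rw [intervalIntegral.integral_comp_mul_left (fun w => exp (-w)) hu, mul_zero,
    intervalIntegral.integral_comp_neg, integral_exp, smul_eq_mul, neg_zero, exp_zero]

lemma lintegral_rpow_mul_exp_neg_mul_Ioi {a r : ℝ} (ha : 0 < a) (hr : 0 < r) :
    ∫⁻ t in Ioi (0:ℝ), ENNReal.ofReal (t ^ (a - 1) * exp (-(r * t))) =
      ENNReal.ofReal ((1 / r) ^ a * Gamma a) := by
  have hint : IntegrableOn (fun t : ℝ => t ^ (a - 1) * exp (-(r * t))) (Ioi 0) := by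
    simpa only [rpow_one, neg_mul] using
      integrableOn_rpow_mul_exp_neg_mul_rpow (by linarith) one_pos hr
  rw [← integral_rpow_mul_exp_neg_mul_Ioi ha hr, ofReal_integral_eq_lintegral_ofReal hint]
  filter_upwards [ae_restrict_mem measurableSet_Ioi] with t ht
  exact mul_nonneg (rpow_nonneg ht.le _) (exp_pos _).le

lemma lintegral_Ioc_rpow_neg_half_mul_exp_neg_mul {u : ℝ} (hu : 0 < u) {c : ℝ} (hc : 0 ≤ c) :
    ∫⁻ v in Ioc 0 c, ENNReal.ofReal (u ^ (1 / 2 - 1 : ℝ) * exp (-(v * u))) =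
      ENNReal.ofReal (u ^ (-3 / 2 : ℝ) * (1 - exp (-(c * u)))) := by
  have hint : IntegrableOn (fun v => u ^ (1 / 2 - 1 : ℝ) * exp (-(v * u))) (Ioc 0 c) :=
    (by fun_prop : Continuous fun v => u ^ (1 / 2 - 1 : ℝ) * exp (-(v * u))).integrableOn_Ioc
  rw [← ofReal_integral_eq_lintegral_ofReal hint (ae_of_all _ fun v => by positivity),
    ← intervalIntegral.integral_of_le hc, intervalIntegral.integral_const_mul]
  simp_rw [mul_comm _ u]
  rw [integral_exp_neg_mul u c hu.ne', ← mul_assoc, ← rpow_neg_one, ← rpow_add hu]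
  norm_num

lemma lintegral_Ioi_rpow_neg_three_halves_mul_one_sub_exp {c : ℝ} (hc : 0 ≤ c) :
    ∫⁻ u in Ioi (0:ℝ), ENNReal.ofReal (u ^ (-3 / 2 : ℝ) * (1 - exp (-(c * u)))) =
      ENNReal.ofReal (2 * √π * √c) := by
  have hmeas : Measurable (Function.uncurry fun (u v : ℝ) =>
      ENNReal.ofReal (u ^ (1 / 2 - 1 : ℝ) * exp (-(v * u)))) := by
    unfold Function.uncurry; fun_prop
  calc _ = ∫⁻ u in Ioi (0:ℝ), ∫⁻ v in Ioc 0 c,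
        ENNReal.ofReal (u ^ (1 / 2 - 1 : ℝ) * exp (-(v * u))) :=
        setLIntegral_congr_fun measurableSet_Ioi fun u hu =>
          (lintegral_Ioc_rpow_neg_half_mul_exp_neg_mul hu hc).symm
    _ = ∫⁻ v in Ioc 0 c, ∫⁻ u in Ioi (0:ℝ),
        ENNReal.ofReal (u ^ (1 / 2 - 1 : ℝ) * exp (-(v * u))) :=
        lintegral_lintegral_swap hmeas.aemeasurable
    _ = ∫⁻ v in Ioc 0 c, ENNReal.ofReal (√π * v ^ (-1 / 2 : ℝ)) := by
        refine setLIntegral_congr_fun measurableSet_Ioc fun v hv => ?_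
        rw [lintegral_rpow_mul_exp_neg_mul_Ioi one_half_pos hv.1, Gamma_one_half_eq,
          one_div, inv_rpow hv.1.le, ← rpow_neg hv.1.le, mul_comm]
        norm_num
    _ = ENNReal.ofReal (2 * √π * √c) := by
        have hint : IntervalIntegrable (fun v : ℝ => √π * v ^ (-1 / 2 : ℝ)) volume 0 c :=
          (intervalIntegral.intervalIntegrable_rpow' (by norm_num)).const_mul _
        rw [← ofReal_integral_eq_lintegral_ofReal
          ((intervalIntegrable_iff_integrableOn_Ioc_of_le hc).1 hint) ?_,
          ← intervalIntegral.integral_of_le hc, intervalIntegral.integral_const_mul,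
          integral_rpow (Or.inl (by norm_num)), sqrt_eq_rpow c]
        · rw [show (-1 / 2 + 1 : ℝ) = 1 / 2 by norm_num, zero_rpow one_half_pos.ne']
          ring_nf
        · filter_upwards [ae_restrict_mem measurableSet_Ioc] with v hv
          have := rpow_nonneg hv.1.le (-1 / 2 : ℝ)
          positivity

lemma lintegral_Ioi_rpow_neg_half_mul_one_sub_exp_neg_div {c : ℝ} (hc : 0 ≤ c) :
    ∫⁻ s in Ioi (0:ℝ), ENNReal.ofReal (s ^ (-1 / 2 : ℝ) * (1 - exp (-(c / s)))) =
      ENNReal.ofReal (2 * √π * √c) := by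
  rw [lintegral_Ioi_comp_inv, ← lintegral_Ioi_rpow_neg_three_halves_mul_one_sub_exp hc]
  refine setLIntegral_congr_fun measurableSet_Ioi fun x hx => ?_
  rw [← ENNReal.ofReal_mul (by positivity), div_inv_eq_mul, ← mul_assoc, inv_rpow hx.le,
    ← rpow_neg hx.le, ← rpow_natCast, ← rpow_neg hx.le, ← rpow_add hx]
  norm_num

lemma lintegral_rpow_mul_exp_neg_sq_mul_Ioi {q r : ℝ} (hq : 0 < q) (hr : 0 < r) :
    ∫⁻ s in Ioi (0:ℝ), ENNReal.ofReal (s ^ (q / 2 - 1) * exp (-(r ^ 2 * s))) =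
      ENNReal.ofReal (Gamma (q / 2) / r ^ q) := by
  rw [lintegral_rpow_mul_exp_neg_mul_Ioi (half_pos hq) (by positivity), one_div,
    ← rpow_natCast, ← rpow_neg hr.le, ← rpow_mul hr.le,
    show (-(2:ℕ) : ℝ) * (q / 2) = -q by push_cast; ring, rpow_neg hr.le, mul_comm,
    ← div_eq_mul_inv]

lemma ofReal_div_mul_rpow_eq_lintegral_Ioi {q r x : ℝ} (hq : 0 < q) (hr : 0 < r) (hx : 0 ≤ x) :
    ENNReal.ofReal (x / (π ^ (q / 2) / Gamma (q / 2) * r ^ q)) =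
      ENNReal.ofReal (π ^ (-(q / 2))) *
        ∫⁻ s in Ioi (0:ℝ), ENNReal.ofReal (s ^ (q / 2 - 1) * (exp (-s * r ^ 2) * x)) := by
  have hrearrange : ∀ s, s ^ (q / 2 - 1) * (exp (-s * r ^ 2) * x) =
      s ^ (q / 2 - 1) * exp (-(r ^ 2 * s)) * x := fun s => by ring_nf
  simp_rw [hrearrange, ENNReal.ofReal_mul' hx]
  rw [lintegral_mul_const' _ _ ENNReal.ofReal_ne_top, lintegral_rpow_mul_exp_neg_sq_mul_Ioi hq hr,
    ← ENNReal.ofReal_mul' hx, ← ENNReal.ofReal_mul (by positivity), rpow_neg pi_pos.le]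
  congr 1
  field_simp

section InnerProductSpace

variable {V : Type*} [NormedAddCommGroup V] [InnerProductSpace ℝ V]

lemma re_cexp_neg_mul_sq_norm_add_I_mul_inner (b : ℝ) (v w : V) :
    (Complex.exp (-(b : ℂ) * (‖v‖ : ℂ) ^ 2 + Complex.I * (⟪w, v⟫_ℝ : ℂ))).re =
      exp (-b * ‖v‖ ^ 2) * cos ⟪v, w⟫_ℝ := by
  rw [← Complex.ofReal_pow, ← Complex.ofReal_neg, ← Complex.ofReal_mul, Complex.exp_re,
    Complex.add_re, Complex.add_im, Complex.ofReal_re, Complex.ofReal_im, Complex.re_mul_ofReal,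
    Complex.im_mul_ofReal, Complex.I_re, Complex.I_im, real_inner_comm]
  ring_nf

variable [FiniteDimensional ℝ V] [MeasurableSpace V] [BorelSpace V]

lemma integrable_exp_neg_mul_sq_norm_mul_cos_inner {b : ℝ} (hb : 0 < b) (w : V) :
    Integrable (fun v : V => exp (-b * ‖v‖ ^ 2) * cos ⟪v, w⟫_ℝ) := by
  simpa only [RCLike.re_to_complex, re_cexp_neg_mul_sq_norm_add_I_mul_inner] using
    (GaussianFourier.integrable_cexp_neg_mul_sq_norm_add (b := b) hb Complex.I w).re

lemma integral_exp_neg_mul_sq_norm_mul_cos_inner {b : ℝ} (hb : 0 < b) (w : V) :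
    ∫ v : V, exp (-b * ‖v‖ ^ 2) * cos ⟪v, w⟫_ℝ =
      (π / b) ^ (finrank ℝ V / 2 : ℝ) * exp (-‖w‖ ^ 2 / (4 * b)) := by
  have h := congrArg Complex.re
    (GaussianFourier.integral_cexp_neg_mul_sq_norm_add (b := b) hb Complex.I w)
  rw [← RCLike.re_to_complex, ← integral_re
    (GaussianFourier.integrable_cexp_neg_mul_sq_norm_add (b := b) hb Complex.I w)] at h
  simp only [RCLike.re_to_complex, re_cexp_neg_mul_sq_norm_add_I_mul_inner] at h
  have hexp : Complex.I ^ 2 * (‖w‖ : ℂ) ^ 2 / (4 * b) = ((-‖w‖ ^ 2 / (4 * b) : ℝ) : ℂ) := by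
    push_cast; rw [Complex.I_sq]; ring
  rw [h, hexp, ← Complex.ofReal_exp, ← Complex.ofReal_natCast, ← Complex.ofReal_ofNat,
    ← Complex.ofReal_div, ← Complex.ofReal_div, ← Complex.ofReal_cpow (by positivity),
    ← Complex.ofReal_mul, Complex.ofReal_re]

lemma lintegral_exp_neg_mul_sq_norm_mul_one_sub_cos_inner {b : ℝ} (hb : 0 < b) (w : V) :
    ∫⁻ v : V, ENNReal.ofReal (exp (-b * ‖v‖ ^ 2) * (1 - cos ⟪v, w⟫_ℝ)) =
      ENNReal.ofReal ((π / b) ^ (finrank ℝ V / 2 : ℝ) * (1 - exp (-‖w‖ ^ 2 / (4 * b)))) := by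
  have hsplit : ∀ v : V, exp (-b * ‖v‖ ^ 2) * (1 - cos ⟪v, w⟫_ℝ) =
      exp (-b * ‖v‖ ^ 2) * cos ⟪v, 0⟫_ℝ - exp (-b * ‖v‖ ^ 2) * cos ⟪v, w⟫_ℝ := by
    simp [mul_sub]
  have hint₀ := integrable_exp_neg_mul_sq_norm_mul_cos_inner hb (0 : V)
  have hint := integrable_exp_neg_mul_sq_norm_mul_cos_inner hb w
  rw [← ofReal_integral_eq_lintegral_ofReal ?_ (ae_of_all _ fun v => ?_)]
  · simp_rw [hsplit]
    rw [integral_sub hint₀ hint, integral_exp_neg_mul_sq_norm_mul_cos_inner hb,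
      integral_exp_neg_mul_sq_norm_mul_cos_inner hb]
    simp [mul_sub]
  · simp_rw [hsplit]
    exact hint₀.sub hint
  · have := cos_le_one ⟪v, w⟫_ℝ
    simp only [Pi.zero_apply]
    exact mul_nonneg (exp_pos _).le (by linarith)

lemma lintegral_Ioi_lintegral_rpow_mul_exp_neg_mul_sq_norm_mul_one_sub_cos (z : V) :
    ∫⁻ s in Ioi (0:ℝ), ∫⁻ t : V, ENNReal.ofReal
        (s ^ ((1 + finrank ℝ V) / 2 - 1 : ℝ) * (exp (-s * ‖t‖ ^ 2) * (1 - cos ⟪t, z⟫_ℝ))) =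
      ENNReal.ofReal (π ^ ((1 + finrank ℝ V) / 2 : ℝ) * ‖z‖) := by
  calc _ = ∫⁻ s in Ioi (0:ℝ), ENNReal.ofReal (π ^ (finrank ℝ V / 2 : ℝ)) *
        ENNReal.ofReal (s ^ (-1 / 2 : ℝ) * (1 - exp (-((‖z‖ ^ 2 / 4) / s)))) := by
        refine setLIntegral_congr_fun measurableSet_Ioi fun s (hs : 0 < s) => ?_
        have hexp : 0 ≤ 1 - exp (-‖z‖ ^ 2 / (4 * s)) := sub_nonneg.2 (exp_le_one_iff.2
          (div_nonpos_of_nonpos_of_nonneg (neg_nonpos.2 (by positivity)) (by positivity)))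
        simp_rw [ENNReal.ofReal_mul (rpow_nonneg hs.le _)]
        rw [lintegral_const_mul' _ _ ENNReal.ofReal_ne_top,
          lintegral_exp_neg_mul_sq_norm_mul_one_sub_cos_inner hs,
          ← ENNReal.ofReal_mul (by positivity), ← ENNReal.ofReal_mul (by positivity),
          ← ENNReal.ofReal_mul (by positivity)]
        congr 1
        rw [div_rpow pi_pos.le hs.le, show -(‖z‖ ^ 2 / 4 / s) = -‖z‖ ^ 2 / (4 * s) by ring,
          show (-1 / 2 : ℝ) = (1 + finrank ℝ V) / 2 - 1 - finrank ℝ V / 2 by ring,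
          rpow_sub hs ((1 + finrank ℝ V) / 2 - 1)]
        ring
    _ = ENNReal.ofReal (π ^ ((1 + finrank ℝ V) / 2 : ℝ) * ‖z‖) := by
        rw [lintegral_const_mul' _ _ ENNReal.ofReal_ne_top,
          lintegral_Ioi_rpow_neg_half_mul_one_sub_exp_neg_div (by positivity),
          ← ENNReal.ofReal_mul (by positivity), show ‖z‖ ^ 2 / 4 = (‖z‖ / 2) ^ 2 by ring,
          sqrt_sq (by positivity), sqrt_eq_rpow,
          show ((1 + finrank ℝ V) / 2 : ℝ) = finrank ℝ V / 2 + 1 / 2 by ring, rpow_add pi_pos]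
        ring_nf

lemma lintegral_one_sub_cos_inner_div_norm_rpow (z : V) :
    ∫⁻ t : V, ENNReal.ofReal ((1 - cos ⟪t, z⟫_ℝ) /
        (π ^ ((1 + finrank ℝ V) / 2 : ℝ) / Gamma ((1 + finrank ℝ V) / 2) *
          ‖t‖ ^ (1 + finrank ℝ V : ℝ))) =
      ENNReal.ofReal ‖z‖ := by
  rcases eq_or_ne z 0 with rfl | hz
  · simp
  have : Nontrivial V := ⟨⟨z, 0, hz⟩⟩
  have hq : (0 : ℝ) < 1 + finrank ℝ V := by positivity
  have hmeas : Measurable (Function.uncurry fun (t : V) (s : ℝ) => ENNReal.ofReal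
      (s ^ ((1 + finrank ℝ V) / 2 - 1 : ℝ) * (exp (-s * ‖t‖ ^ 2) * (1 - cos ⟪t, z⟫_ℝ)))) := by
    unfold Function.uncurry; fun_prop
  calc _ = ∫⁻ t : V, ENNReal.ofReal (π ^ (-((1 + finrank ℝ V) / 2) : ℝ)) *
        ∫⁻ s in Ioi (0:ℝ), ENNReal.ofReal
          (s ^ ((1 + finrank ℝ V) / 2 - 1 : ℝ) * (exp (-s * ‖t‖ ^ 2) * (1 - cos ⟪t, z⟫_ℝ))) := by
        refine lintegral_congr_ae ?_
        filter_upwards [Measure.ae_ne volume (0 : V)] with t ht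
        exact ofReal_div_mul_rpow_eq_lintegral_Ioi hq (norm_pos_iff.2 ht)
          (sub_nonneg.2 (cos_le_one _))
    _ = ENNReal.ofReal (π ^ (-((1 + finrank ℝ V) / 2) : ℝ)) *
        ∫⁻ s in Ioi (0:ℝ), ∫⁻ t : V, ENNReal.ofReal
          (s ^ ((1 + finrank ℝ V) / 2 - 1 : ℝ) * (exp (-s * ‖t‖ ^ 2) * (1 - cos ⟪t, z⟫_ℝ))) := by
        rw [lintegral_const_mul' _ _ ENNReal.ofReal_ne_top,
          lintegral_lintegral_swap hmeas.aemeasurable]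
    _ = ENNReal.ofReal ‖z‖ := by
        rw [lintegral_Ioi_lintegral_rpow_mul_exp_neg_mul_sq_norm_mul_one_sub_cos,
          ← ENNReal.ofReal_mul (by positivity), ← mul_assoc, ← rpow_add pi_pos, neg_add_cancel,
          rpow_zero, one_mul]

end InnerProductSpace

section Fubini

variable {α β : Type*} [MeasurableSpace α] [MeasurableSpace β] {μ : Measure α} {ν : Measure β}

lemma integral_integral_eq_toReal_lintegral_lintegral [SFinite ν] {f : α → β → ℝ}
    (hf : Measurable (Function.uncurry f)) (hf0 : ∀ a b, 0 ≤ f a b)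
    (hint : ∀ᵐ a ∂μ, Integrable (f a) ν) :
    ∫ a, ∫ b, f a b ∂ν ∂μ = (∫⁻ a, ∫⁻ b, ENNReal.ofReal (f a b) ∂ν ∂μ).toReal := by
  calc ∫ a, ∫ b, f a b ∂ν ∂μ = ∫ a, (∫⁻ b, ENNReal.ofReal (f a b) ∂ν).toReal ∂μ :=
        integral_congr_ae (ae_of_all _ fun a => integral_eq_lintegral_of_nonneg_ae
          (ae_of_all _ (hf0 a)) (hf.comp measurable_prodMk_left).aestronglyMeasurable)
    _ = _ := integral_toReal hf.ennreal_ofReal.lintegral_prod_right'.aemeasurable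
        (hint.mono fun _ ha => ha.lintegral_lt_top)

lemma sq_norm_integral_eq_integral_re_mul_conj [SFinite μ] {f : α → ℂ} (hf : Integrable f μ) :
    ‖∫ a, f a ∂μ‖ ^ 2 = ∫ q, (f q.1 * starRingEnd ℂ (f q.2)).re ∂(μ.prod μ) := by
  have hconj : Integrable (fun a => starRingEnd ℂ (f a)) μ :=
    Complex.conjCLE.toContinuousLinearMap.integrable_comp hf
  have hre := integral_re (hf.mul_prod hconj)
  simp only [RCLike.re_to_complex] at hre
  rw [hre, integral_prod_mul f (fun a => starRingEnd ℂ (f a)), integral_conj, Complex.mul_conj,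
    Complex.ofReal_re, Complex.normSq_eq_norm_sq]

end Fubini

section CharFun

variable {Ω E : Type*} [MeasurableSpace Ω] {μ : Measure Ω} [NormedAddCommGroup E]
  [InnerProductSpace ℝ E] [MeasurableSpace E] [BorelSpace E] [SecondCountableTopology E]
  {X : Ω → E}

lemma integrable_cos_inner_sub [IsFiniteMeasure μ] (hX : Measurable X) (t : E) :
    Integrable (fun q : Ω × Ω => cos ⟪t, X q.1 - X q.2⟫_ℝ) (μ.prod μ) :=
  (integrable_const (1 : ℝ)).mono' (by fun_prop) (ae_of_all _ fun _ => abs_cos_le_one _)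

lemma one_sub_sq_norm_integral_exp_inner_mul_I [IsProbabilityMeasure μ] (hX : Measurable X)
    (t : E) :
    1 - ‖∫ ω, Complex.exp (⟪t, X ω⟫_ℝ * Complex.I) ∂μ‖ ^ 2 =
      ∫ q, (1 - cos ⟪t, X q.1 - X q.2⟫_ℝ) ∂(μ.prod μ) := by
  have hint : Integrable (fun ω => Complex.exp (⟪t, X ω⟫_ℝ * Complex.I)) μ :=
    (integrable_const (1 : ℝ)).mono' (by fun_prop)
      (ae_of_all _ fun ω => (Complex.norm_exp_ofReal_mul_I _).le)
  have hcos : ∀ q : Ω × Ω, (Complex.exp (⟪t, X q.1⟫_ℝ * Complex.I) *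
      starRingEnd ℂ (Complex.exp (⟪t, X q.2⟫_ℝ * Complex.I))).re = cos ⟪t, X q.1 - X q.2⟫_ℝ := by
    intro q
    rw [← Complex.exp_conj, map_mul, Complex.conj_ofReal, Complex.conj_I, ← Complex.exp_add,
      inner_sub_right, ← Complex.exp_ofReal_mul_I_re]
    push_cast
    ring_nf
  rw [sq_norm_integral_eq_integral_re_mul_conj hint,
    integral_sub (integrable_const 1) (integrable_cos_inner_sub hX t), integral_const]
  simp_rw [hcos, probReal_univ, one_smul]

end CharFun

theorem integral_one_sub_sq_charFun_general {Ω : Type*} [MeasureSpace Ω]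
    [IsProbabilityMeasure (volume : Measure Ω)]
    (p : ℕ) (X : Ω → EuclideanSpace ℝ (Fin p))
    (hX : Measurable X) :
    (∫ t : EuclideanSpace ℝ (Fin p),
        (1 - ‖∫ ω, Complex.exp ((inner ℝ t (X ω) : ℝ) * Complex.I)‖ ^ 2) /
          ((Real.pi ^ ((1 + (p : ℝ)) / 2) / Real.Gamma ((1 + (p : ℝ)) / 2)) *
            ‖t‖ ^ (1 + (p : ℝ)))) =
      ∫ ω : Ω × Ω, ‖X ω.1 - X ω.2‖ := by
  have hkey := lintegral_one_sub_cos_inner_div_norm_rpow (V := EuclideanSpace ℝ (Fin p))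
  simp only [finrank_euclideanSpace_fin] at hkey
  set C := π ^ ((1 + (p : ℝ)) / 2) / Gamma ((1 + (p : ℝ)) / 2)
  set F := fun (t : EuclideanSpace ℝ (Fin p)) (q : Ω × Ω) =>
    (1 - cos ⟪t, X q.1 - X q.2⟫_ℝ) / (C * ‖t‖ ^ (1 + (p : ℝ)))
  have hF0 : ∀ t q, 0 ≤ F t q :=
    fun t q => div_nonneg (sub_nonneg.2 (cos_le_one _)) (by positivity)
  have hFmeas : Measurable (Function.uncurry F) := by unfold F Function.uncurry; fun_prop
  have hFint : ∀ t, Integrable (F t) :=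
    fun t => ((integrable_const 1).sub (integrable_cos_inner_sub hX t)).div_const _
  calc _ = ∫ t, ∫ q, F t q := by
        simp_rw [F, integral_div, Measure.volume_eq_prod,
          one_sub_sq_norm_integral_exp_inner_mul_I hX]
    _ = (∫⁻ q : Ω × Ω, ∫⁻ t, ENNReal.ofReal (F t q)).toReal := by
        rw [integral_integral_eq_toReal_lintegral_lintegral hFmeas hF0 (ae_of_all _ hFint),
          lintegral_lintegral_swap hFmeas.ennreal_ofReal.aemeasurable]
    _ = ∫ q : Ω × Ω, ‖X q.1 - X q.2‖ := by
        simp_rw [F, hkey]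
        exact (integral_eq_lintegral_of_nonneg_ae (ae_of_all _ fun _ => norm_nonneg _)
          (by fun_prop)).symm

/-- `∫_{ℝ^p} (1 - |f_X(t)|²)/(c_p |t|^{1+p}) dt = E|X - X'|`, where `X'` is an
independent copy of `X` and `c_p = π^{(1+p)/2}/Γ((1+p)/2)`. -/
theorem integral_one_sub_sq_charFun {Ω : Type*} [MeasureSpace Ω]
    [IsProbabilityMeasure (volume : Measure Ω)]
    (p : ℕ) (X : Ω → EuclideanSpace ℝ (Fin p))
    (hX : Measurable X) (hX1 : Integrable (fun ω => ‖X ω‖)) :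
    (∫ t : EuclideanSpace ℝ (Fin p),
        (1 - ‖∫ ω, Complex.exp ((inner ℝ t (X ω) : ℝ) * Complex.I)‖ ^ 2) /
          ((Real.pi ^ ((1 + (p : ℝ)) / 2) / Real.Gamma ((1 + (p : ℝ)) / 2)) *
            ‖t‖ ^ (1 + (p : ℝ)))) =
      ∫ ω : Ω × Ω, ‖X ω.1 - X ω.2‖ :=
  integral_one_sub_sq_charFun_general p X hX
end

section
/- Let X₁,...,Xₙ be points in ℝ^p, a_{kl} = |X_k - X_l| their pairwise Euclidean distances, and A_{kl} = a_{kl} - ā_{k·} - ā_{·l} + ā_{··} the double-centered distance matrix. If Σ_{k,l} A_{kl}² = 0, then X₁ = X₂ = ··· = Xₙ. -/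
/-!
Put `c = 1/n`, `r k = ∑ j, a k j` and `S = ∑ i, ∑ j, a i j`. For a symmetric matrix with zero
diagonal, row and column sums agree, so the vanishing of the diagonal entries of the
double-centered matrix gives `c * r k = c² S / 2` for every `k`. The centering terms of every
entry then cancel, so the double-centered matrix equals the matrix itself, hence is zero.
For `a k l = dist (X k) (X l)` this forces all the points to coincide.
-/

open Finset

section DoubleCenter

variable {ι : Type*} [Fintype ι]

noncomputable def doubleCenter (a : ι → ι → ℝ) (k l : ι) : ℝ :=
  a k l - (1 / (Fintype.card ι : ℝ)) * ∑ j, a k j - (1 / (Fintype.card ι : ℝ)) * ∑ i, a i l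
    + (1 / (Fintype.card ι : ℝ) ^ 2) * ∑ i, ∑ j, a i j

theorem row_mean_eq_half_grand_mean_of_doubleCenter_diag_eq_zero {a : ι → ι → ℝ}
    (hsymm : ∀ k l, a k l = a l k) (hdiag : ∀ k, a k k = 0) {k : ι}
    (hk : doubleCenter a k k = 0) :
    (1 / (Fintype.card ι : ℝ)) * ∑ j, a k j
      = (1 / 2) * ((1 / (Fintype.card ι : ℝ) ^ 2) * ∑ i, ∑ j, a i j) := by
  have hcol : ∑ i, a i k = ∑ j, a k j := sum_congr rfl fun i _ => hsymm i k
  rw [doubleCenter, hdiag, hcol] at hk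
  linarith

theorem eq_zero_of_doubleCenter_eq_zero {a : ι → ι → ℝ}
    (hsymm : ∀ k l, a k l = a l k) (hdiag : ∀ k, a k k = 0)
    (h : ∀ k l, doubleCenter a k l = 0) (k l : ι) : a k l = 0 := by
  have hk := row_mean_eq_half_grand_mean_of_doubleCenter_diag_eq_zero hsymm hdiag (h k k)
  have hl := row_mean_eq_half_grand_mean_of_doubleCenter_diag_eq_zero hsymm hdiag (h l l)
  have hkl := h k l
  have hcol : ∑ i, a i l = ∑ j, a l j := sum_congr rfl fun i _ => hsymm i l
  rw [doubleCenter, hcol] at hkl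
  linarith

end DoubleCenter

theorem eq_zero_of_sum_sum_sq_eq_zero {ι κ : Type*} [Fintype ι] [Fintype κ] {f : ι → κ → ℝ}
    (h : ∑ i, ∑ j, f i j ^ 2 = 0) : ∀ i j, f i j = 0 := by
  simpa [sum_eq_zero_iff_of_nonneg, sum_nonneg, sq_nonneg] using h

theorem double_centered_zero_iff_constant_general (n p : ℕ)
    (X : Fin n → EuclideanSpace ℝ (Fin p))
    (A : Fin n → Fin n → ℝ)
    (hA : ∀ k l, A k l = dist (X k) (X l)
      - (1 / (n : ℝ)) * ∑ j, dist (X k) (X j)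
      - (1 / (n : ℝ)) * ∑ i, dist (X i) (X l)
      + (1 / (n : ℝ) ^ 2) * ∑ i, ∑ j, dist (X i) (X j))
    (h : ∑ k, ∑ l, (A k l) ^ 2 = 0) :
    ∀ k l, X k = X l := by
  have hcenter : ∀ k l, doubleCenter (fun i j => dist (X i) (X j)) k l = 0 := fun k l => by
    rw [doubleCenter, Fintype.card_fin, ← hA]
    exact eq_zero_of_sum_sum_sq_eq_zero h k l
  intro k l
  exact dist_eq_zero.mp <|
    eq_zero_of_doubleCenter_eq_zero (fun i j => dist_comm (X i) (X j))
      (fun i => dist_self (X i)) hcenter k l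

/-- If the double-centered Euclidean distance matrix of a sample vanishes
(in Frobenius norm), then all sample points are identical. -/
theorem double_centered_zero_iff_constant (n p : ℕ) (hn : 0 < n)
    (X : Fin n → EuclideanSpace ℝ (Fin p))
    (A : Fin n → Fin n → ℝ)
    (hA : ∀ k l, A k l = dist (X k) (X l)
      - (1 / (n : ℝ)) * ∑ j, dist (X k) (X j)
      - (1 / (n : ℝ)) * ∑ i, dist (X i) (X l)
      + (1 / (n : ℝ) ^ 2) * ∑ i, ∑ j, dist (X i) (X j))
    (h : ∑ k, ∑ l, (A k l) ^ 2 = 0) :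
    ∀ k l, X k = X l :=
  double_centered_zero_iff_constant_general n p X A hA h
end

section
/- If X is a random vector in ℝ^p with E|X| < ∞ and distance variance dVar(X) = 0, then X is almost surely constant. -/
/-!
If the distance variance vanishes, its continuous integrand vanishes almost everywhere, hence
everywhere, so the characteristic function `φ` of `X` satisfies `φ (s + t) = φ s * φ t`. Then
`‖φ t‖ * ‖φ (-t)‖ = φ 0 = 1` with both factors at most `1` gives `‖φ t‖ = 1`, and by strict
convexity of `ℂ` the unimodular variable `exp (i ⟪X, t⟫)` equals its mean `φ t` almost surely.
Testing this at `t = bᵢ` and `t = √2 • bᵢ` for a basis `b`, every `⟪X ω - X ω₀, bᵢ⟫` lies in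
`2πℤ ∩ (2π / √2)ℤ = {0}`.
-/

open MeasureTheory Complex Real

open scoped RealInnerProductSpace

lemma eq_of_lintegral_ofReal_norm_sub_sq_div_eq_zero {α F : Type*} [TopologicalSpace α]
    [MeasurableSpace α] [OpensMeasurableSpace α] {μ : Measure α} [μ.IsOpenPosMeasure]
    [NormedAddCommGroup F] {f g : α → F} (hf : Continuous f) (hg : Continuous g)
    {w : α → ℝ} (hw : Measurable w) (hw_pos : ∀ᵐ u ∂μ, 0 < w u)
    (h : ∫⁻ u, ENNReal.ofReal (‖f u - g u‖ ^ 2 / w u) ∂μ = 0) : f = g := by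
  have hmeas : Measurable fun u => ENNReal.ofReal (‖f u - g u‖ ^ 2 / w u) :=
    (((hf.sub hg).norm.pow 2).measurable.div hw).ennreal_ofReal
  refine (hf.ae_eq_iff_eq μ hg).1 ?_
  filter_upwards [(lintegral_eq_zero_iff hmeas).1 h, hw_pos] with u hu hwu
  have : ‖f u - g u‖ ^ 2 ≤ 0 := by
    simpa using (div_le_iff₀ hwu).1 (ENNReal.ofReal_eq_zero.1 hu)
  simpa [sub_eq_zero] using this

lemma eq_of_exp_mul_I_eq_of_exp_sqrt_two_mul_I_eq {x y : ℝ}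
    (h₁ : cexp (x * I) = cexp (y * I)) (h₂ : cexp ((√2 * x : ℝ) * I) = cexp ((√2 * y : ℝ) * I)) :
    x = y := by
  rw [← Circle.coe_exp, ← Circle.coe_exp, ← Circle.ext_iff, Circle.exp_eq_exp] at h₁ h₂
  obtain ⟨m, hm⟩ := h₁
  obtain ⟨n, hn⟩ := h₂
  obtain rfl : m = 0 := by
    by_contra hm0
    refine (irrational_sqrt_two.mul_intCast hm0).ne_int n ?_
    have : √2 * m * (2 * π) = n * (2 * π) := by linear_combination hn - √2 * hm
    exact mul_right_cancel₀ (by positivity) this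
  simpa using hm

lemma ae_eq_const_of_forall_ae_exp_inner_mul_I_eq {α E : Type*} [MeasurableSpace α]
    [NormedAddCommGroup E] [InnerProductSpace ℝ E] [FiniteDimensional ℝ E]
    {μ : Measure α} [NeZero μ] {X : α → E}
    (h : ∀ t : E, ∃ z : ℂ, ∀ᵐ ω ∂μ, cexp (⟪X ω, t⟫ * I) = z) :
    ∃ c : E, X =ᵐ[μ] fun _ => c := by
  choose z hz using h
  set b := Module.finBasis ℝ E
  have hb : ∀ᵐ ω ∂μ, ∀ i, cexp (⟪X ω, b i⟫ * I) = z (b i) ∧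
      cexp (⟪X ω, √2 • b i⟫ * I) = z (√2 • b i) :=
    ae_all_iff.2 fun i => (hz (b i)).and (hz (√2 • b i))
  obtain ⟨ω₀, hω₀⟩ := hb.exists
  refine ⟨X ω₀, hb.mono fun ω hω => InnerProductSpace.ext_inner_right_basis b fun i => ?_⟩
  refine eq_of_exp_mul_I_eq_of_exp_sqrt_two_mul_I_eq ((hω i).1.trans (hω₀ i).1.symm) ?_
  simpa only [real_inner_smul_right] using (hω i).2.trans (hω₀ i).2.symm

lemma ae_eq_integral_of_norm_integral_eq {α E : Type*} [MeasurableSpace α]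
    [NormedAddCommGroup E] [NormedSpace ℝ E] [CompleteSpace E] [StrictConvexSpace ℝ E]
    {μ : Measure α} [IsProbabilityMeasure μ] {f : α → E} {C : ℝ}
    (h_le : ∀ᵐ x ∂μ, ‖f x‖ ≤ C) (h : ‖∫ x, f x ∂μ‖ = C) :
    f =ᵐ[μ] fun _ => ∫ x, f x ∂μ := by
  rcases ae_eq_const_or_norm_integral_lt_of_norm_le_const h_le with h' | h'
  · rwa [average_eq_integral] at h'
  · simp [h] at h'

section CharFun

variable {Ω E : Type*} [MeasurableSpace Ω] [NormedAddCommGroup E] [InnerProductSpace ℝ E]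
  [MeasurableSpace E]

lemma charFun_map_eq_integral [OpensMeasurableSpace E] {μ : Measure Ω} {X : Ω → E}
    (hX : AEMeasurable X μ) (t : E) :
    charFun (μ.map X) t = ∫ ω, cexp (⟪X ω, t⟫ * I) ∂μ :=
  integral_map hX (by fun_prop)

lemma norm_charFun_eq_one_of_charFun_add_eq_mul {μ : Measure E} [IsProbabilityMeasure μ]
    (h : ∀ s t, charFun μ (s + t) = charFun μ s * charFun μ t) (t : E) :
    ‖charFun μ t‖ = 1 := by
  have h_one : ‖charFun μ t‖ * ‖charFun μ (-t)‖ = 1 := by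
    rw [← norm_mul, ← h, add_neg_cancel, charFun_zero]
    simp
  nlinarith [norm_charFun_le_one (μ := μ) t, norm_charFun_le_one (μ := μ) (-t),
    norm_nonneg (charFun μ t)]

lemma ae_exp_inner_mul_I_eq_charFun_map [OpensMeasurableSpace E] {μ : Measure Ω}
    [IsProbabilityMeasure μ] {X : Ω → E} (hX : AEMeasurable X μ) {t : E}
    (ht : ‖charFun (μ.map X) t‖ = 1) :
    ∀ᵐ ω ∂μ, cexp (⟪X ω, t⟫ * I) = charFun (μ.map X) t := by
  rw [charFun_map_eq_integral hX] at ht ⊢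
  exact ae_eq_integral_of_norm_integral_eq (.of_forall fun ω => (norm_exp_ofReal_mul_I _).le) ht

lemma ae_eq_const_of_charFun_map_add_eq_mul [OpensMeasurableSpace E] [FiniteDimensional ℝ E]
    {μ : Measure Ω} [IsProbabilityMeasure μ] {X : Ω → E} (hX : AEMeasurable X μ)
    (h : ∀ s t, charFun (μ.map X) (s + t) = charFun (μ.map X) s * charFun (μ.map X) t) :
    ∃ c : E, X =ᵐ[μ] fun _ => c := by
  have := Measure.isProbabilityMeasure_map hX
  exact ae_eq_const_of_forall_ae_exp_inner_mul_I_eq fun t =>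
    ⟨_, ae_exp_inner_mul_I_eq_charFun_map hX (norm_charFun_eq_one_of_charFun_add_eq_mul h t)⟩

end CharFun

theorem dvar_eq_zero_ae_const_general {Ω : Type*} [MeasureSpace Ω]
    [IsProbabilityMeasure (volume : Measure Ω)]
    (p : ℕ) (X : Ω → EuclideanSpace ℝ (Fin p))
    (hX : Measurable X)
    (h : (∫⁻ u : EuclideanSpace ℝ (Fin p) × EuclideanSpace ℝ (Fin p),
        ENNReal.ofReal
          (‖(∫ ω, Complex.exp ((inner ℝ (u.1 + u.2) (X ω) : ℝ) * Complex.I))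
              - (∫ ω, Complex.exp ((inner ℝ u.1 (X ω) : ℝ) * Complex.I))
                * (∫ ω, Complex.exp ((inner ℝ u.2 (X ω) : ℝ) * Complex.I))‖ ^ 2 /
            ((Real.pi ^ ((1 + (p : ℝ)) / 2) / Real.Gamma ((1 + (p : ℝ)) / 2)) ^ 2 *
             ‖u.1‖ ^ (1 + (p : ℝ)) * ‖u.2‖ ^ (1 + (p : ℝ))))) = 0) :
    ∃ c : EuclideanSpace ℝ (Fin p), X =ᵐ[volume] fun _ => c := by
  obtain hE | hE := subsingleton_or_nontrivial (EuclideanSpace ℝ (Fin p))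
  · exact ⟨0, .of_forall fun _ => Subsingleton.elim _ _⟩
  have := Measure.isProbabilityMeasure_map (μ := volume) hX.aemeasurable
  set φ := charFun (volume.map X)
  have hφ (t : EuclideanSpace ℝ (Fin p)) : ∫ ω, cexp (⟪t, X ω⟫ * I) = φ t := by
    simp only [φ, charFun_map_eq_integral hX.aemeasurable, real_inner_comm]
  simp only [hφ] at h
  have hw_pos : ∀ᵐ u : EuclideanSpace ℝ (Fin p) × EuclideanSpace ℝ (Fin p),
      0 < (π ^ ((1 + (p : ℝ)) / 2) / Real.Gamma ((1 + (p : ℝ)) / 2)) ^ 2 *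
        ‖u.1‖ ^ (1 + (p : ℝ)) * ‖u.2‖ ^ (1 + (p : ℝ)) := by
    filter_upwards [Measure.quasiMeasurePreserving_fst.ae (Measure.ae_ne volume 0),
      Measure.quasiMeasurePreserving_snd.ae (Measure.ae_ne volume 0)] with u h₁ h₂
    have := norm_pos_iff.2 h₁
    have := norm_pos_iff.2 h₂
    positivity
  have hφ_cont : Continuous φ := continuous_charFun
  have hmul := eq_of_lintegral_ofReal_norm_sub_sq_div_eq_zero (by fun_prop) (by fun_prop)
    (by fun_prop) hw_pos h
  exact ae_eq_const_of_charFun_map_add_eq_mul hX.aemeasurable fun s t => congrFun hmul (s, t)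

/-- If `dVar(X) = 0` then `X` is almost surely constant. -/
theorem dvar_eq_zero_ae_const {Ω : Type*} [MeasureSpace Ω]
    [IsProbabilityMeasure (volume : Measure Ω)]
    (p : ℕ) (X : Ω → EuclideanSpace ℝ (Fin p))
    (hX : Measurable X) (hX1 : Integrable (fun ω => ‖X ω‖))
    (h : (∫⁻ u : EuclideanSpace ℝ (Fin p) × EuclideanSpace ℝ (Fin p),
        ENNReal.ofReal
          (‖(∫ ω, Complex.exp ((inner ℝ (u.1 + u.2) (X ω) : ℝ) * Complex.I))
              - (∫ ω, Complex.exp ((inner ℝ u.1 (X ω) : ℝ) * Complex.I))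
                * (∫ ω, Complex.exp ((inner ℝ u.2 (X ω) : ℝ) * Complex.I))‖ ^ 2 /
            ((Real.pi ^ ((1 + (p : ℝ)) / 2) / Real.Gamma ((1 + (p : ℝ)) / 2)) ^ 2 *
             ‖u.1‖ ^ (1 + (p : ℝ)) * ‖u.2‖ ^ (1 + (p : ℝ))))) = 0) :
    ∃ c : EuclideanSpace ℝ (Fin p), X =ᵐ[volume] fun _ => c :=
  dvar_eq_zero_ae_const_general p X hX h
end

section
/- If X, Y are jointly standard bivariate normal with correlation ρ, then V²(X,Y) = F(ρ)/π² where F(ρ) = 4π(ρ·arcsin(ρ) + √(1-ρ²) - ρ·arcsin(ρ/2) - √(4-ρ²) + 1). -/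
/-!
For `ρ ≥ 0` the integrand is `e^{-(t²+s²)} ((1 - e^{-ρts}) / (ts))²`, and
`(1 - e^{-ρa}) / a = ∫₀^ρ e^{-ua} du`, so it is the integral over `(u, v) ∈ [0, ρ]²` of
`e^{-(t²+s²) - (u+v)ts}`. Integrating in `(t, s)` first (Tonelli) gives the Gaussian integral
`2π / √(4 - (u+v)²)`, whose integral over the square is elementary: `arcsin (x/2)` and
`x arcsin (x/2) + √(4 - x²)` are the antiderivatives involved. Negative `ρ` reduces to `-ρ` by
`t ↦ -t`.
-/

open MeasureTheory Real Set

/-- `|f_{X,Y}(t,s) - f_X(t) f_Y(s)|² t⁻² s⁻²` at `u = (t, s)`. -/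
noncomputable def dcovIntegrand (ρ : ℝ) (u : ℝ × ℝ) : ℝ :=
  (exp (-(u.1 ^ 2 + u.2 ^ 2) / 2 - ρ * u.1 * u.2) - exp (-u.1 ^ 2 / 2) * exp (-u.2 ^ 2 / 2)) ^ 2 /
    (u.1 ^ 2 * u.2 ^ 2)

noncomputable def dcovF (ρ : ℝ) : ℝ :=
  4 * π * (ρ * arcsin ρ + √(1 - ρ ^ 2) - ρ * arcsin (ρ / 2) - √(4 - ρ ^ 2) + 1)

theorem integrable_exp_neg_sq_add_sq_sub_mul {c : ℝ} (hc : |c| < 2) :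
    Integrable fun p : ℝ × ℝ => exp (-(p.1 ^ 2 + p.2 ^ 2) - c * p.1 * p.2) := by
  have hb : 0 < 1 - |c| / 2 := by linarith
  have hg := (integrable_exp_neg_mul_sq hb).mul_prod (integrable_exp_neg_mul_sq hb)
  rw [← Measure.volume_eq_prod] at hg
  refine hg.mono (by fun_prop) (.of_forall fun p => ?_)
  simp only [norm_eq_abs, abs_exp, ← exp_add]
  gcongr
  have hxy : -(c * p.1 * p.2) ≤ |c| * (|p.1| * |p.2|) := by
    rw [mul_assoc, ← abs_mul, ← abs_mul]; exact neg_le_abs _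
  nlinarith [abs_nonneg c, sq_nonneg (|p.1| - |p.2|), sq_abs p.1, sq_abs p.2]

theorem integral_exp_neg_sq_add_sq_sub_mul {c : ℝ} (hc : |c| < 2) :
    ∫ p : ℝ × ℝ, exp (-(p.1 ^ 2 + p.2 ^ 2) - c * p.1 * p.2) = 2 * π / √(4 - c ^ 2) := by
  have hc4 : 0 < 4 - c ^ 2 := by nlinarith [sq_abs c, abs_nonneg c]
  have hint := integrable_exp_neg_sq_add_sq_sub_mul hc
  rw [Measure.volume_eq_prod] at hint ⊢
  have complete_square (x y : ℝ) : exp (-(x ^ 2 + y ^ 2) - c * x * y)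
      = exp (-((4 - c ^ 2) / 4) * x ^ 2) * exp (-1 * (y + c * x / 2) ^ 2) := by
    rw [← exp_add]; ring_nf
  have inner (x : ℝ) : ∫ y, exp (-(x ^ 2 + y ^ 2) - c * x * y)
      = exp (-((4 - c ^ 2) / 4) * x ^ 2) * √π := by
    simp_rw [complete_square]
    rw [integral_const_mul, integral_add_right_eq_self (fun y => exp (-1 * y ^ 2)),
      integral_gaussian, div_one]
  rw [integral_prod _ hint]
  simp_rw [inner]
  have hπ : π / ((4 - c ^ 2) / 4) = (2 * √π / √(4 - c ^ 2)) ^ 2 := by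
    rw [div_pow, mul_pow, sq_sqrt pi_pos.le, sq_sqrt hc4.le]; field_simp; ring
  rw [integral_mul_const, integral_gaussian, hπ, sqrt_sq (by positivity), div_mul_eq_mul_div,
    mul_assoc, mul_self_sqrt pi_pos.le]

theorem lintegral_exp_neg_sq_add_sq_sub_mul {c : ℝ} (hc : |c| < 2) :
    ∫⁻ p : ℝ × ℝ, ENNReal.ofReal (exp (-(p.1 ^ 2 + p.2 ^ 2) - c * p.1 * p.2))
      = ENNReal.ofReal (2 * π / √(4 - c ^ 2)) := by
  rw [← integral_exp_neg_sq_add_sq_sub_mul hc, ofReal_integral_eq_lintegral_ofReal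
    (integrable_exp_neg_sq_add_sq_sub_mul hc) (.of_forall fun _ => (exp_pos _).le)]

theorem lintegral_Ioo_ofReal_eq_intervalIntegral {f : ℝ → ℝ} {a b : ℝ} (hab : a ≤ b)
    (hf : ContinuousOn f (Icc a b)) (hf0 : ∀ x ∈ Ioo a b, 0 ≤ f x) :
    ∫⁻ x in Ioo a b, ENNReal.ofReal (f x) = ENNReal.ofReal (∫ x in a..b, f x) := by
  rw [intervalIntegral.integral_of_le hab, integral_Ioc_eq_integral_Ioo,
    ofReal_integral_eq_lintegral_ofReal (hf.integrableOn_Icc.mono_set Ioo_subset_Icc_self)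
      ((ae_restrict_iff' measurableSet_Ioo).2 (.of_forall hf0))]

theorem integral_exp_neg_mul_s14 (ρ : ℝ) {a : ℝ} (ha : a ≠ 0) :
    ∫ u in (0 : ℝ)..ρ, exp (-(u * a)) = (1 - exp (-(ρ * a))) / a := by
  simp_rw [← mul_neg]
  rw [intervalIntegral.integral_comp_mul_right exp (neg_ne_zero.2 ha), integral_exp, zero_mul,
    exp_zero, smul_eq_mul]
  field_simp
  ring

theorem ofReal_sq_one_sub_exp_div_eq_lintegral {ρ a : ℝ} (hρ : 0 ≤ ρ) (ha : a ≠ 0) :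
    ENNReal.ofReal (((1 - exp (-(ρ * a))) / a) ^ 2)
      = ∫⁻ q in Ioo 0 ρ ×ˢ Ioo 0 ρ, ENNReal.ofReal (exp (-((q.1 + q.2) * a))) := by
  have hL : 0 ≤ (1 - exp (-(ρ * a))) / a := by
    rw [← integral_exp_neg_mul_s14 ρ ha]
    exact intervalIntegral.integral_nonneg hρ fun _ _ => (exp_pos _).le
  have h1 : ∫⁻ u in Ioo 0 ρ, ENNReal.ofReal (exp (-(u * a)))
      = ENNReal.ofReal ((1 - exp (-(ρ * a))) / a) := by
    rw [lintegral_Ioo_ofReal_eq_intervalIntegral hρ (by fun_prop) fun _ _ => (exp_pos _).le,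
      integral_exp_neg_mul_s14 ρ ha]
  have hsplit (q : ℝ × ℝ) : ENNReal.ofReal (exp (-((q.1 + q.2) * a)))
      = ENNReal.ofReal (exp (-(q.1 * a))) * ENNReal.ofReal (exp (-(q.2 * a))) := by
    rw [← ENNReal.ofReal_mul (exp_pos _).le, ← exp_add]; ring_nf
  rw [Measure.volume_eq_prod, ← Measure.prod_restrict]
  simp_rw [hsplit]
  rw [lintegral_prod_mul (f := fun u => ENNReal.ofReal (exp (-(u * a))))
    (g := fun u => ENNReal.ofReal (exp (-(u * a)))) (by fun_prop) (by fun_prop), h1,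
    ← ENNReal.ofReal_mul' hL, sq]

-- Both sides vanish where `ts = 0`, through `x / 0 = 0`.
theorem dcovIntegrand_eq (ρ : ℝ) (u : ℝ × ℝ) :
    dcovIntegrand ρ u
      = exp (-(u.1 ^ 2 + u.2 ^ 2)) * ((1 - exp (-(ρ * (u.1 * u.2)))) / (u.1 * u.2)) ^ 2 := by
  have h1 : exp (-(u.1 ^ 2 + u.2 ^ 2) / 2 - ρ * u.1 * u.2)
      = exp (-(u.1 ^ 2 + u.2 ^ 2) / 2) * exp (-(ρ * (u.1 * u.2))) := by
    rw [← exp_add]; ring_nf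
  have h2 : exp (-u.1 ^ 2 / 2) * exp (-u.2 ^ 2 / 2) = exp (-(u.1 ^ 2 + u.2 ^ 2) / 2) := by
    rw [← exp_add]; ring_nf
  have h3 : exp (-(u.1 ^ 2 + u.2 ^ 2)) = exp (-(u.1 ^ 2 + u.2 ^ 2) / 2) ^ 2 := by
    rw [← exp_nat_mul]; ring_nf
  rw [dcovIntegrand, h1, h2, h3]
  field_simp
  ring

theorem ae_ofReal_dcovIntegrand_eq_lintegral {ρ : ℝ} (hρ : 0 ≤ ρ) :
    ∀ᵐ u : ℝ × ℝ, ENNReal.ofReal (dcovIntegrand ρ u)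
      = ∫⁻ q in Ioo 0 ρ ×ˢ Ioo 0 ρ,
          ENNReal.ofReal (exp (-(u.1 ^ 2 + u.2 ^ 2) - (q.1 + q.2) * u.1 * u.2)) := by
  have hne : ∀ᵐ u : ℝ × ℝ, u.1 ≠ 0 ∧ u.2 ≠ 0 := by
    rw [Measure.volume_eq_prod]
    exact (Measure.quasiMeasurePreserving_fst.ae (Measure.ae_ne volume 0)).and
      (Measure.quasiMeasurePreserving_snd.ae (Measure.ae_ne volume 0))
  filter_upwards [hne] with u ⟨h1, h2⟩
  have hsplit (q : ℝ × ℝ) :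
      ENNReal.ofReal (exp (-(u.1 ^ 2 + u.2 ^ 2) - (q.1 + q.2) * u.1 * u.2))
        = ENNReal.ofReal (exp (-(u.1 ^ 2 + u.2 ^ 2)))
          * ENNReal.ofReal (exp (-((q.1 + q.2) * (u.1 * u.2)))) := by
    rw [← ENNReal.ofReal_mul (exp_pos _).le, ← exp_add]; ring_nf
  simp_rw [hsplit]
  rw [lintegral_const_mul' _ _ ENNReal.ofReal_ne_top,
    ← ofReal_sq_one_sub_exp_div_eq_lintegral hρ (mul_ne_zero h1 h2),
    ← ENNReal.ofReal_mul (exp_pos _).le, dcovIntegrand_eq]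

theorem hasDerivAt_arcsin_div_two {x : ℝ} (hx : x ∈ Ioo (-2) 2) :
    HasDerivAt (fun x => arcsin (x / 2)) (1 / √(4 - x ^ 2)) x := by
  have h := (hasDerivAt_arcsin (x := x / 2) (by linarith [hx.1]) (by linarith [hx.2])).comp x
    ((hasDerivAt_id' x).div_const 2)
  refine h.congr_deriv ?_
  have h4 : 0 < 4 - x ^ 2 := by nlinarith [hx.1, hx.2]
  rw [show 1 - (x / 2) ^ 2 = (4 - x ^ 2) / 2 ^ 2 by ring, sqrt_div' _ (by norm_num),
    sqrt_sq (by norm_num)]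
  field_simp

theorem hasDerivAt_mul_arcsin_div_two_add_sqrt {x : ℝ} (hx : x ∈ Ioo (-2) 2) :
    HasDerivAt (fun x => x * arcsin (x / 2) + √(4 - x ^ 2)) (arcsin (x / 2)) x := by
  have h4 : 0 < 4 - x ^ 2 := by nlinarith [hx.1, hx.2]
  have h := ((hasDerivAt_id' x).mul (hasDerivAt_arcsin_div_two hx)).add
    (((hasDerivAt_pow 2 x).const_sub 4).sqrt h4.ne')
  refine h.congr_deriv ?_
  field_simp
  ring

theorem integral_one_div_sqrt_four_sub_sq {a b : ℝ} (ha : a ∈ Ioo (-2) 2)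
    (hb : b ∈ Ioo (-2) 2) :
    ∫ x in a..b, 1 / √(4 - x ^ 2) = arcsin (b / 2) - arcsin (a / 2) := by
  have hab : uIcc a b ⊆ Ioo (-2) 2 := ordConnected_Ioo.uIcc_subset ha hb
  refine intervalIntegral.integral_eq_sub_of_hasDerivAt
    (fun x hx => hasDerivAt_arcsin_div_two (hab hx)) (ContinuousOn.intervalIntegrable ?_)
  refine continuousOn_const.div (by fun_prop) fun x hx => (sqrt_pos.2 ?_).ne'
  nlinarith [(hab hx).1, (hab hx).2]

theorem integral_arcsin_div_two {a b : ℝ} (ha : -2 ≤ a) (hab : a ≤ b) (hb : b ≤ 2) :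
    ∫ x in a..b, arcsin (x / 2)
      = (b * arcsin (b / 2) + √(4 - b ^ 2)) - (a * arcsin (a / 2) + √(4 - a ^ 2)) :=
  intervalIntegral.integral_eq_sub_of_hasDerivAt_of_le hab (by fun_prop)
    (fun x hx => hasDerivAt_mul_arcsin_div_two_add_sqrt
      ⟨by linarith [hx.1], by linarith [hx.2]⟩)
    (Continuous.intervalIntegrable (by fun_prop) _ _)

theorem integral_two_pi_mul_arcsin_sub_arcsin {ρ : ℝ} (h0 : 0 ≤ ρ) (h1 : ρ ≤ 1) :
    ∫ u in (0 : ℝ)..ρ, 2 * π * (arcsin ((u + ρ) / 2) - arcsin (u / 2)) = dcovF ρ := by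
  rw [intervalIntegral.integral_const_mul,
    intervalIntegral.integral_sub (Continuous.intervalIntegrable (by fun_prop) _ _)
      (Continuous.intervalIntegrable (by fun_prop) _ _),
    intervalIntegral.integral_comp_add_right (fun x => arcsin (x / 2)),
    integral_arcsin_div_two (by linarith) (by linarith) (by linarith),
    integral_arcsin_div_two (by linarith) h0 (by linarith)]
  have h2ρ : √(4 - (ρ + ρ) ^ 2) = 2 * √(1 - ρ ^ 2) := by
    rw [show 4 - (ρ + ρ) ^ 2 = 2 ^ 2 * (1 - ρ ^ 2) by ring, sqrt_mul' _ (by nlinarith),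
      sqrt_sq (by norm_num)]
  have h4 : √(4 - 0 ^ 2 : ℝ) = 2 := by
    rw [show (4 - 0 ^ 2 : ℝ) = 2 ^ 2 by norm_num, sqrt_sq (by norm_num)]
  rw [dcovF, h2ρ, h4, zero_add, add_self_div_two]
  simp only [zero_div, arcsin_zero, mul_zero, zero_add]
  ring

theorem dcovF_nonneg {ρ : ℝ} (h0 : 0 ≤ ρ) (h1 : ρ ≤ 1) : 0 ≤ dcovF ρ := by
  rw [← integral_two_pi_mul_arcsin_sub_arcsin h0 h1]
  refine intervalIntegral.integral_nonneg h0 fun u _ => mul_nonneg (by positivity) ?_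
  exact sub_nonneg.2 (arcsin_le_arcsin (by linarith))

theorem lintegral_Ioo_prod_Ioo_two_pi_div_sqrt {ρ : ℝ} (h0 : 0 ≤ ρ) (h1 : ρ ≤ 1) :
    ∫⁻ q in Ioo 0 ρ ×ˢ Ioo 0 ρ, ENNReal.ofReal (2 * π / √(4 - (q.1 + q.2) ^ 2))
      = ENNReal.ofReal (dcovF ρ) := by
  have inner (u : ℝ) (hu : u ∈ Ioo 0 ρ) :
      ∫⁻ v in Ioo 0 ρ, ENNReal.ofReal (2 * π / √(4 - (u + v) ^ 2))
        = ENNReal.ofReal (2 * π * (arcsin ((u + ρ) / 2) - arcsin (u / 2))) := by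
    have hpos (v : ℝ) (hv : v ∈ Icc 0 ρ) : 0 < 4 - (u + v) ^ 2 := by
      nlinarith [hu.1, hu.2, hv.1, hv.2]
    rw [lintegral_Ioo_ofReal_eq_intervalIntegral (f := fun v => 2 * π / √(4 - (u + v) ^ 2))
      h0 (continuousOn_const.div (by fun_prop) fun v hv => (sqrt_pos.2 (hpos v hv)).ne')
      fun v _ => div_nonneg (by positivity) (sqrt_nonneg _)]
    simp_rw [← mul_one_div (2 * π)]
    rw [intervalIntegral.integral_const_mul,
      intervalIntegral.integral_comp_add_left (fun x => 1 / √(4 - x ^ 2)), add_zero,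
      integral_one_div_sqrt_four_sub_sq ⟨by linarith [hu.1], by linarith [hu.2]⟩
        ⟨by linarith [hu.1], by linarith [hu.2]⟩]
  rw [Measure.volume_eq_prod, ← Measure.prod_restrict, lintegral_prod _ (by fun_prop),
    setLIntegral_congr_fun measurableSet_Ioo inner,
    lintegral_Ioo_ofReal_eq_intervalIntegral h0 (by fun_prop)
      fun u _ => mul_nonneg (by positivity) (sub_nonneg.2 (arcsin_le_arcsin (by linarith))),
    integral_two_pi_mul_arcsin_sub_arcsin h0 h1]

theorem dcovIntegrand_nonneg (ρ : ℝ) (u : ℝ × ℝ) : 0 ≤ dcovIntegrand ρ u := by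
  unfold dcovIntegrand; positivity

theorem measurable_dcovIntegrand (ρ : ℝ) : Measurable (dcovIntegrand ρ) := by
  unfold dcovIntegrand; fun_prop

theorem integral_dcovIntegrand_of_nonneg {ρ : ℝ} (h0 : 0 ≤ ρ) (h1 : ρ ≤ 1) :
    ∫ u, dcovIntegrand ρ u = dcovF ρ := by
  have hS : MeasurableSet (Ioo 0 ρ ×ˢ Ioo 0 ρ) := measurableSet_Ioo.prod measurableSet_Ioo
  have tonelli : ∫⁻ u, ENNReal.ofReal (dcovIntegrand ρ u) = ENNReal.ofReal (dcovF ρ) := calc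
    ∫⁻ u, ENNReal.ofReal (dcovIntegrand ρ u)
      = ∫⁻ u : ℝ × ℝ, ∫⁻ q in Ioo 0 ρ ×ˢ Ioo 0 ρ,
          ENNReal.ofReal (exp (-(u.1 ^ 2 + u.2 ^ 2) - (q.1 + q.2) * u.1 * u.2)) :=
      lintegral_congr_ae (ae_ofReal_dcovIntegrand_eq_lintegral h0)
    _ = ∫⁻ q in Ioo 0 ρ ×ˢ Ioo 0 ρ, ∫⁻ u : ℝ × ℝ,
          ENNReal.ofReal (exp (-(u.1 ^ 2 + u.2 ^ 2) - (q.1 + q.2) * u.1 * u.2)) :=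
      lintegral_lintegral_swap (by fun_prop)
    _ = ∫⁻ q in Ioo 0 ρ ×ˢ Ioo 0 ρ, ENNReal.ofReal (2 * π / √(4 - (q.1 + q.2) ^ 2)) := by
      refine setLIntegral_congr_fun hS fun q hq => lintegral_exp_neg_sq_add_sq_sub_mul ?_
      rw [abs_lt]
      constructor <;> linarith [hq.1.1, hq.1.2, hq.2.1, hq.2.2]
    _ = ENNReal.ofReal (dcovF ρ) := lintegral_Ioo_prod_Ioo_two_pi_div_sqrt h0 h1
  rw [integral_eq_lintegral_of_nonneg_ae (.of_forall (dcovIntegrand_nonneg ρ))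
    (measurable_dcovIntegrand ρ).aestronglyMeasurable, tonelli,
    ENNReal.toReal_ofReal (dcovF_nonneg h0 h1)]

theorem integral_dcovIntegrand_neg (ρ : ℝ) :
    ∫ u, dcovIntegrand (-ρ) u = ∫ u, dcovIntegrand ρ u := by
  have h := ((Measure.measurePreserving_neg (volume : Measure ℝ)).prod
    (MeasurePreserving.id (volume : Measure ℝ))).integral_comp
    ((MeasurableEquiv.neg ℝ).prodCongr (MeasurableEquiv.refl ℝ)).measurableEmbedding
    (dcovIntegrand (-ρ))
  rw [← Measure.volume_eq_prod] at h
  rw [← h]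
  congr 1 with u
  simp [dcovIntegrand]

theorem dcovF_neg (ρ : ℝ) : dcovF (-ρ) = dcovF ρ := by
  simp only [dcovF, neg_div, arcsin_neg, neg_sq]
  ring

theorem integral_dcovIntegrand {ρ : ℝ} (hρ : |ρ| ≤ 1) :
    ∫ u, dcovIntegrand ρ u = dcovF ρ := by
  obtain ⟨hl, hr⟩ := abs_le.1 hρ
  rcases le_total 0 ρ with h0 | h0
  · exact integral_dcovIntegrand_of_nonneg h0 hr
  · rw [← integral_dcovIntegrand_neg, ← dcovF_neg ρ]
    exact integral_dcovIntegrand_of_nonneg (neg_nonneg.2 h0) (by linarith)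

/-- For standard bivariate normal `(X, Y)` with correlation `ρ`, expressed through the
explicit characteristic functions `f_{X,Y}(t,s) = e^{-(t²+s²)/2 - ρts}`,
`f_X(t) = e^{-t²/2}`, `f_Y(s) = e^{-s²/2}`:
`V²(X,Y) = F(ρ)/π²` with
`F(ρ) = 4π(ρ arcsin ρ + √(1-ρ²) - ρ arcsin(ρ/2) - √(4-ρ²) + 1)`. -/
theorem dcov_bivariate_normal (ρ : ℝ) (hρ : ρ ∈ Set.Icc (-1 : ℝ) 1) :
    (1 / Real.pi ^ 2) *
      (∫ u : ℝ × ℝ,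
        (Real.exp (-(u.1 ^ 2 + u.2 ^ 2) / 2 - ρ * u.1 * u.2)
            - Real.exp (-u.1 ^ 2 / 2) * Real.exp (-u.2 ^ 2 / 2)) ^ 2 /
          (u.1 ^ 2 * u.2 ^ 2)) =
      (4 * Real.pi * (ρ * Real.arcsin ρ + Real.sqrt (1 - ρ ^ 2)
          - ρ * Real.arcsin (ρ / 2) - Real.sqrt (4 - ρ ^ 2) + 1)) / Real.pi ^ 2 := by
  rw [one_div_mul_eq_div]
  exact congrArg (· / π ^ 2) (integral_dcovIntegrand (abs_le.2 hρ))
end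

section
/- The function F(ρ) = ∫∫_{ℝ²} exp(-t²-s²)·(1 - 2e^{-ρts} + e^{-2ρts}) t^{-2} s^{-2} dt ds satisfies F''(z) = 4π/√(1-z²) - 2π/√(1 - z²/4) for |z| < 1. -/
open MeasureTheory Real

/-!
Write the integrand as `e^{-t²-s²} g₀(ρts) / (ts)²` with `g₀(a) = 1 - 2e^{-a} + e^{-2a} = (1 - e^{-a})²`.
Each differentiation in `ρ` brings down a factor `ts`, so after two of them the singular factor is
gone and `F''(z) = ∫∫ e^{-t²-s²} g₀''(zts) = 4 V(z) - 2 V(z/2)` with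
`V(c) = ∫∫ e^{-t²-s²-2cts} = π / √(1 - c²)` (complete the square in `s`).
Differentiation under the integral sign is justified by `|g₀⁽ʲ⁾(a)| ≤ C |a|^{2-j} e^{2|a|}` together
with `e^{-t²-s²+2|xts|} ≤ e^{-(1-r)(t²+s²)}` for `|x| ≤ r < 1`.
-/

noncomputable def g₀ (a : ℝ) : ℝ := 1 - 2 * exp (-a) + exp (-2 * a)

noncomputable def g₁ (a : ℝ) : ℝ := 2 * exp (-a) - 2 * exp (-2 * a)

noncomputable def g₂ (a : ℝ) : ℝ := -2 * exp (-a) + 4 * exp (-2 * a)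

lemma hasDerivAt_g₀ (a : ℝ) : HasDerivAt g₀ (g₁ a) a := by
  have h₁ := (hasDerivAt_neg a).exp
  have h₂ := ((hasDerivAt_id a).const_mul (-2)).exp
  exact (((h₁.const_mul 2).const_sub 1).add h₂).congr_deriv (by simp only [g₁, id]; ring)

lemma hasDerivAt_g₁ (a : ℝ) : HasDerivAt g₁ (g₂ a) a := by
  have h₁ := (hasDerivAt_neg a).exp
  have h₂ := ((hasDerivAt_id a).const_mul (-2)).exp
  exact ((h₁.const_mul 2).sub (h₂.const_mul 2)).congr_deriv (by simp only [g₂, id]; ring)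

lemma abs_exp_sub_one_le_mul_exp_abs (b : ℝ) : |exp b - 1| ≤ |b| * exp |b| := by
  rcases le_or_gt 0 b with hb | hb
  · have h := mul_le_mul_of_nonneg_left (add_one_le_exp (-b)) (exp_pos b).le
    rw [← exp_add, add_neg_cancel, exp_zero] at h
    rw [abs_of_nonneg hb, abs_of_nonneg (by linarith [add_one_le_exp b])]
    nlinarith
  · rw [abs_of_neg hb, abs_of_nonpos (by linarith [exp_le_one_iff.2 hb.le])]
    nlinarith [add_one_le_exp b, one_le_exp (neg_nonneg.2 hb.le)]

lemma exp_neg_two_mul (a : ℝ) : exp (-2 * a) = exp (-a) ^ 2 := by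
  rw [← exp_nat_mul]; ring_nf

lemma abs_g₀_le (a : ℝ) : |g₀ a| ≤ |a| ^ 2 * exp (2 * |a|) := by
  have h := abs_exp_sub_one_le_mul_exp_abs (-a)
  rw [abs_neg] at h
  calc |g₀ a| = |exp (-a) - 1| ^ 2 := by
        rw [← abs_pow, g₀, exp_neg_two_mul]; ring_nf
    _ ≤ (|a| * exp |a|) ^ 2 := by gcongr
    _ = |a| ^ 2 * exp (2 * |a|) := by rw [mul_pow, ← exp_nat_mul]; norm_num

lemma abs_g₁_le (a : ℝ) : |g₁ a| ≤ 2 * |a| * exp (2 * |a|) := by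
  have h := abs_exp_sub_one_le_mul_exp_abs (-a)
  rw [abs_neg] at h
  have hexp : exp (-a) ≤ exp |a| := exp_le_exp.2 (neg_le_abs a)
  calc |g₁ a| = 2 * exp (-a) * |exp (-a) - 1| := by
        rw [g₁, exp_neg_two_mul, show 2 * exp (-a) - 2 * exp (-a) ^ 2
          = -(2 * exp (-a) * (exp (-a) - 1)) by ring, abs_neg, abs_mul, abs_mul,
          abs_two, abs_exp]
    _ ≤ 2 * exp |a| * (|a| * exp |a|) := by gcongr
    _ = 2 * |a| * exp (2 * |a|) := by rw [two_mul |a|, exp_add]; ring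

lemma abs_g₂_le (a : ℝ) : |g₂ a| ≤ 6 * exp (2 * |a|) := by
  have h₁ : exp (-a) ≤ exp (2 * |a|) := exp_le_exp.2 (by cases abs_cases a <;> linarith)
  have h₂ : exp (-2 * a) ≤ exp (2 * |a|) := exp_le_exp.2 (by cases abs_cases a <;> linarith)
  calc |g₂ a| ≤ |-2 * exp (-a)| + |4 * exp (-2 * a)| := abs_add_le _ _
    _ = 2 * exp (-a) + 4 * exp (-2 * a) := by
        rw [abs_mul, abs_mul, abs_exp, abs_exp]; norm_num
    _ ≤ 6 * exp (2 * |a|) := by linarith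

noncomputable def gaussKernel (g : ℝ → ℝ) (k : ℕ) (x : ℝ) (u : ℝ × ℝ) : ℝ :=
  exp (-u.1 ^ 2 - u.2 ^ 2) * g (x * u.1 * u.2) / (u.1 * u.2) ^ k

noncomputable def gaussWeight (r : ℝ) (u : ℝ × ℝ) : ℝ :=
  exp (-(1 - r) * u.1 ^ 2) * exp (-(1 - r) * u.2 ^ 2)

lemma integrable_gaussWeight {r : ℝ} (hr : r < 1) : Integrable (gaussWeight r) := by
  have h : 0 < 1 - r := by linarith
  rw [Measure.volume_eq_prod]
  exact (integrable_exp_neg_mul_sq h).mul_prod (integrable_exp_neg_mul_sq h)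

lemma exp_neg_sq_mul_exp_le_gaussWeight {r x : ℝ} (hx : |x| ≤ r) (u : ℝ × ℝ) :
    exp (-u.1 ^ 2 - u.2 ^ 2) * exp (2 * |x * u.1 * u.2|) ≤ gaussWeight r u := by
  obtain ⟨t, s⟩ := u
  rw [gaussWeight, ← exp_add, ← exp_add, exp_le_exp]
  have hts : 2 * |t * s| ≤ t ^ 2 + s ^ 2 := by
    rw [abs_mul]; nlinarith [sq_nonneg (|t| - |s|), sq_abs t, sq_abs s]
  have hxts : |x * t * s| ≤ r * |t * s| := by
    rw [mul_assoc, abs_mul]; exact mul_le_mul_of_nonneg_right hx (abs_nonneg _)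
  nlinarith [abs_nonneg (t * s), (abs_nonneg x).trans hx]

lemma nonneg_of_abs_le_mul_pow_mul_exp {g : ℝ → ℝ} {C : ℝ} {k : ℕ}
    (hg : ∀ a, |g a| ≤ C * |a| ^ k * exp (2 * |a|)) : 0 ≤ C := by
  have := (abs_nonneg _).trans (hg 1)
  rw [abs_one, one_pow, mul_one] at this
  exact nonneg_of_mul_nonneg_left this (exp_pos _)

lemma abs_div_pow_le {g : ℝ → ℝ} {C : ℝ} {k : ℕ}
    (hg : ∀ a, |g a| ≤ C * |a| ^ k * exp (2 * |a|)) (x p : ℝ) :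
    |g (x * p)| / |p| ^ k ≤ C * |x| ^ k * exp (2 * |x * p|) := by
  rcases eq_or_ne p 0 with rfl | hp
  · rcases k with _ | k
    · simpa using hg 0
    · have hC := nonneg_of_abs_le_mul_pow_mul_exp hg
      rw [abs_zero, zero_pow k.succ_ne_zero, div_zero]
      positivity
  · rw [div_le_iff₀ (by positivity)]
    calc |g (x * p)| ≤ C * |x * p| ^ k * exp (2 * |x * p|) := hg _
      _ = C * |x| ^ k * exp (2 * |x * p|) * |p| ^ k := by rw [abs_mul, mul_pow]; ring

lemma norm_gaussKernel_le {g : ℝ → ℝ} {C : ℝ} {k : ℕ}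
    (hg : ∀ a, |g a| ≤ C * |a| ^ k * exp (2 * |a|)) {r x : ℝ} (hr : r ≤ 1) (hx : |x| ≤ r)
    (u : ℝ × ℝ) : ‖gaussKernel g k x u‖ ≤ C * gaussWeight r u := by
  have hC := nonneg_of_abs_le_mul_pow_mul_exp hg
  have hxk : |x| ^ k ≤ 1 := pow_le_one₀ (abs_nonneg x) (hx.trans hr)
  calc ‖gaussKernel g k x u‖
      = exp (-u.1 ^ 2 - u.2 ^ 2) * (|g (x * (u.1 * u.2))| / |u.1 * u.2| ^ k) := by
        rw [gaussKernel, norm_eq_abs, abs_div, abs_mul, abs_exp, abs_pow, mul_assoc x,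
          mul_div_assoc]
    _ ≤ exp (-u.1 ^ 2 - u.2 ^ 2) * (C * |x| ^ k * exp (2 * |x * (u.1 * u.2)|)) := by
        gcongr; exact abs_div_pow_le hg x _
    _ = C * |x| ^ k * (exp (-u.1 ^ 2 - u.2 ^ 2) * exp (2 * |x * u.1 * u.2|)) := by
        rw [← mul_assoc x]; ring
    _ ≤ C * 1 * gaussWeight r u := by
        gcongr; exact exp_neg_sq_mul_exp_le_gaussWeight hx u
    _ = C * gaussWeight r u := by rw [mul_one]

lemma hasDerivAt_gaussKernel {g g' : ℝ → ℝ} (hg : ∀ a, HasDerivAt g (g' a) a) (k : ℕ)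
    {u : ℝ × ℝ} (hu : u.1 * u.2 ≠ 0) (x : ℝ) :
    HasDerivAt (fun y => gaussKernel g (k + 1) y u) (gaussKernel g' k x u) x := by
  have hlin : HasDerivAt (fun y => y * u.1 * u.2) (u.1 * u.2) x := by
    simpa [mul_assoc] using (hasDerivAt_id x).mul_const (u.1 * u.2)
  refine (((hg _).comp x hlin).const_mul (exp (-u.1 ^ 2 - u.2 ^ 2))).div_const
    ((u.1 * u.2) ^ (k + 1)) |>.congr_deriv ?_
  rw [gaussKernel, pow_succ]
  field_simp
  ring

lemma aestronglyMeasurable_gaussKernel {g : ℝ → ℝ} (hg : Measurable g) (k : ℕ) (x : ℝ) :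
    AEStronglyMeasurable (gaussKernel g k x) := by
  unfold gaussKernel
  exact Measurable.aestronglyMeasurable (by fun_prop)

lemma ae_fst_mul_snd_ne_zero : ∀ᵐ u : ℝ × ℝ, u.1 * u.2 ≠ 0 := by
  rw [Measure.volume_eq_prod]
  filter_upwards [Measure.quasiMeasurePreserving_fst.ae (Measure.ae_ne volume 0),
    Measure.quasiMeasurePreserving_snd.ae (Measure.ae_ne volume 0)] with u h₁ h₂
  exact mul_ne_zero h₁ h₂

theorem hasDerivAt_integral_gaussKernel {g g' : ℝ → ℝ} {C C' : ℝ} {k : ℕ}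
    (hg : ∀ a, HasDerivAt g (g' a) a)
    (hg_le : ∀ a, |g a| ≤ C * |a| ^ (k + 1) * exp (2 * |a|))
    (hg'_le : ∀ a, |g' a| ≤ C' * |a| ^ k * exp (2 * |a|)) {ρ : ℝ} (hρ : |ρ| < 1) :
    HasDerivAt (fun x => ∫ u, gaussKernel g (k + 1) x u) (∫ u, gaussKernel g' k ρ u) ρ := by
  have hg_meas : Measurable g :=
    (continuous_iff_continuousAt.2 fun a => (hg a).continuousAt).measurable
  have hg'_meas : Measurable g' := by
    rw [show g' = deriv g from funext fun a => (hg a).deriv.symm]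
    exact measurable_deriv g
  set r := (1 + |ρ|) / 2 with hr_def
  have hr : r < 1 := by linarith
  have hball : ∀ x ∈ Metric.ball ρ ((1 - |ρ|) / 2), |x| ≤ r := by
    intro x hx
    rw [Metric.mem_ball, dist_eq] at hx
    linarith [abs_sub_abs_le_abs_sub x ρ]
  refine (hasDerivAt_integral_of_dominated_loc_of_deriv_le
    (Metric.ball_mem_nhds ρ (by linarith))
    (.of_forall fun x => aestronglyMeasurable_gaussKernel hg_meas _ x)
    ((integrable_gaussWeight hρ).const_mul C |>.mono'
      (aestronglyMeasurable_gaussKernel hg_meas _ ρ)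
      (.of_forall (norm_gaussKernel_le hg_le (by linarith) le_rfl)))
    (aestronglyMeasurable_gaussKernel hg'_meas k ρ)
    (.of_forall fun u x hx => norm_gaussKernel_le hg'_le hr.le (hball x hx) u)
    ((integrable_gaussWeight hr).const_mul C')
    ?_).2
  filter_upwards [ae_fst_mul_snd_ne_zero] with u hu x _
  exact hasDerivAt_gaussKernel hg k hu x

lemma integrable_exp_neg_sq_sub_cross {c : ℝ} (hc : |c| < 1) :
    Integrable fun u : ℝ × ℝ => exp (-u.1 ^ 2 - u.2 ^ 2 - 2 * c * u.1 * u.2) := by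
  refine (integrable_gaussWeight hc).mono' (Measurable.aestronglyMeasurable (by fun_prop))
    (.of_forall fun u => ?_)
  refine le_trans ?_ (exp_neg_sq_mul_exp_le_gaussWeight le_rfl u)
  rw [norm_eq_abs, abs_exp, ← exp_add, exp_le_exp]
  linarith [neg_abs_le (c * u.1 * u.2)]

lemma integral_exp_neg_sq_sub_cross {c : ℝ} (hc : |c| < 1) :
    ∫ u : ℝ × ℝ, exp (-u.1 ^ 2 - u.2 ^ 2 - 2 * c * u.1 * u.2) = π / √(1 - c ^ 2) := by
  have hI := integrable_exp_neg_sq_sub_cross hc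
  rw [Measure.volume_eq_prod] at hI ⊢
  have h_inner (t : ℝ) : ∫ s, exp (-t ^ 2 - s ^ 2 - 2 * c * t * s)
      = √π * exp (-(1 - c ^ 2) * t ^ 2) := by
    have hsq (s : ℝ) : -t ^ 2 - s ^ 2 - 2 * c * t * s
        = -1 * (s + c * t) ^ 2 + -(1 - c ^ 2) * t ^ 2 := by ring
    simp_rw [hsq, exp_add, integral_mul_const,
      integral_add_right_eq_self (fun s => exp (-1 * s ^ 2)), integral_gaussian, div_one]
  rw [integral_prod _ hI]
  simp_rw [h_inner]
  rw [integral_const_mul, integral_gaussian, sqrt_div pi_nonneg, mul_div_assoc',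
    mul_self_sqrt pi_nonneg]

lemma integral_gaussKernel_g₂ {z : ℝ} (hz : |z| < 1) :
    ∫ u, gaussKernel g₂ 0 z u = 4 * π / √(1 - z ^ 2) - 2 * π / √(1 - z ^ 2 / 4) := by
  have hz2 : |z / 2| < 1 := by rw [abs_div, abs_two]; linarith
  have h_split : (fun u => gaussKernel g₂ 0 z u) = fun u : ℝ × ℝ =>
      4 * exp (-u.1 ^ 2 - u.2 ^ 2 - 2 * z * u.1 * u.2)
        - 2 * exp (-u.1 ^ 2 - u.2 ^ 2 - 2 * (z / 2) * u.1 * u.2) := by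
    ext u
    have e₁ : exp (-u.1 ^ 2 - u.2 ^ 2 - 2 * z * u.1 * u.2)
        = exp (-u.1 ^ 2 - u.2 ^ 2) * exp (-2 * (z * u.1 * u.2)) := by rw [← exp_add]; ring_nf
    have e₂ : exp (-u.1 ^ 2 - u.2 ^ 2 - 2 * (z / 2) * u.1 * u.2)
        = exp (-u.1 ^ 2 - u.2 ^ 2) * exp (-(z * u.1 * u.2)) := by rw [← exp_add]; ring_nf
    rw [e₁, e₂, gaussKernel, g₂]
    ring
  rw [h_split, integral_sub ((integrable_exp_neg_sq_sub_cross hz).const_mul 4)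
      ((integrable_exp_neg_sq_sub_cross hz2).const_mul 2),
    integral_const_mul, integral_const_mul, integral_exp_neg_sq_sub_cross hz,
    integral_exp_neg_sq_sub_cross hz2]
  ring_nf

/-- The function `F(ρ) = ∫∫ e^{-t²-s²}(1 - 2e^{-ρts} + e^{-2ρts}) t⁻² s⁻² dt ds`
satisfies `F''(z) = 4π/√(1-z²) - 2π/√(1-z²/4)` for `|z| < 1`. -/
theorem F_second_deriv (z : ℝ) (hz : |z| < 1) :
    deriv (deriv (fun ρ : ℝ =>
        ∫ u : ℝ × ℝ,
          Real.exp (-u.1 ^ 2 - u.2 ^ 2) *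
            (1 - 2 * Real.exp (-ρ * u.1 * u.2) + Real.exp (-2 * ρ * u.1 * u.2)) /
          (u.1 ^ 2 * u.2 ^ 2))) z =
      4 * Real.pi / Real.sqrt (1 - z ^ 2) - 2 * Real.pi / Real.sqrt (1 - z ^ 2 / 4) := by
  have hF : (fun ρ : ℝ => ∫ u : ℝ × ℝ, exp (-u.1 ^ 2 - u.2 ^ 2) *
      (1 - 2 * exp (-ρ * u.1 * u.2) + exp (-2 * ρ * u.1 * u.2)) / (u.1 ^ 2 * u.2 ^ 2))
      = fun ρ => ∫ u, gaussKernel g₀ 2 ρ u := by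
    ext ρ; congr 1; ext u; simp only [gaussKernel, g₀]; ring_nf
  have hF' : deriv (fun ρ => ∫ u, gaussKernel g₀ 2 ρ u) =ᶠ[nhds z]
      fun ρ => ∫ u, gaussKernel g₁ 1 ρ u := by
    filter_upwards [(isOpen_lt continuous_abs continuous_const).mem_nhds hz] with ρ hρ
    exact (hasDerivAt_integral_gaussKernel (C := 1) (C' := 2) hasDerivAt_g₀
      (by simpa using abs_g₀_le) (by simpa using abs_g₁_le) hρ).deriv
  have hF'' : HasDerivAt (fun ρ => ∫ u, gaussKernel g₁ 1 ρ u) (∫ u, gaussKernel g₂ 0 z u) z :=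
    hasDerivAt_integral_gaussKernel (C := 2) (C' := 6) hasDerivAt_g₁
      (by simpa using abs_g₁_le) (by simpa using abs_g₂_le) hz
  rw [hF, hF'.deriv_eq, hF''.deriv, integral_gaussKernel_g₂ hz]
end

section
/- If X and Y are standard normal with correlation ρ, the squared distance correlation R²(X,Y) = (ρ·arcsin ρ + √(1-ρ²) - ρ·arcsin(ρ/2) - √(4-ρ²) + 1)/(1 + π/3 - √3) satisfies R(X,Y) ≤ |ρ|, with R(X,Y)/|ρ| → (1 + π/3 - √3)^{-1/2}/2 as ρ → 0, and this limit is the infimum of R(X,Y)/|ρ| over ρ ≠ 0. -/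
/-!
The numerator `dCovSq ρ` (proportional to the squared distance covariance) vanishes at `0` and
has derivative `arcsinGap t = arcsin t - arcsin (t / 2) = t * ∫ u in 1/2..1, (1 - t²u²)^(-1/2)`,
so `arcsinGap t / t` increases from `1 / 2` on `[0, 1)`. Hence `arcsinGap t ≥ t / 2`, giving
`dCovSq ρ ≥ ρ² / 4`, and `dCovSq ρ = ∫ t in 0..ρ, arcsinGap t ≤ ρ * arcsinGap ρ / 2`. The latter
makes `dCovSq ρ / ρ²` nondecreasing on `(0, 1]`, so `dCovSq ρ ≤ dCovSq 1 * ρ²` with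
`dCovSq 1 = 1 + π/3 - √3`, and squeezes `dCovSq ρ / ρ²` between `1 / 4` and
`arcsinGap ρ / (2ρ) → arcsinGap'(0) / 2 = 1 / 4`. Everything is even in `ρ`.
-/

open Real Filter Set intervalIntegral Topology

noncomputable def dCovSq (ρ : ℝ) : ℝ :=
  ρ * arcsin ρ + √(1 - ρ ^ 2) - ρ * arcsin (ρ / 2) - √(4 - ρ ^ 2) + 1

noncomputable def arcsinGap (t : ℝ) : ℝ := arcsin t - arcsin (t / 2)

noncomputable def arcsinGapSlope (t : ℝ) : ℝ := ∫ u in (1 / 2 : ℝ)..1, 1 / √(1 - (t * u) ^ 2)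

lemma continuous_dCovSq : Continuous dCovSq := by
  unfold dCovSq; fun_prop

lemma continuous_arcsinGap : Continuous arcsinGap := by
  unfold arcsinGap; fun_prop

lemma dCovSq_neg (ρ : ℝ) : dCovSq (-ρ) = dCovSq ρ := by
  simp only [dCovSq, neg_div, arcsin_neg, neg_sq]
  ring

lemma arcsinGap_neg (t : ℝ) : arcsinGap (-t) = -arcsinGap t := by
  simp only [arcsinGap, neg_div, arcsin_neg]
  ring

lemma dCovSq_zero : dCovSq 0 = 0 := by
  norm_num [dCovSq, show (4 : ℝ) = 2 ^ 2 by norm_num]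

lemma arcsin_one_half : arcsin (1 / 2) = π / 6 := by
  rw [← sin_pi_div_six, arcsin_sin] <;> linarith [pi_pos]

lemma dCovSq_one : dCovSq 1 = 1 + π / 3 - √3 := by
  norm_num [dCovSq, arcsin_one_half]
  ring

lemma hasDerivAt_dCovSq {x : ℝ} (hx : x ∈ Ioo (-1 : ℝ) 1) :
    HasDerivAt dCovSq (arcsinGap x) x := by
  obtain ⟨h₁, h₂⟩ := hx
  have h1x : 0 < 1 - x ^ 2 := by nlinarith
  have h4x : 0 < 4 - x ^ 2 := by nlinarith
  have hasin := hasDerivAt_arcsin (x := x) (by linarith) (by linarith)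
  have hasin2 := (hasDerivAt_arcsin (x := x / 2) (by linarith) (by linarith)).comp x
    ((hasDerivAt_id x).div_const 2)
  have hsqrt1 := ((hasDerivAt_pow 2 x).const_sub 1).sqrt h1x.ne'
  have hsqrt4 := ((hasDerivAt_pow 2 x).const_sub 4).sqrt h4x.ne'
  have hsum := (((((hasDerivAt_id x).mul hasin).add hsqrt1).sub
    ((hasDerivAt_id x).mul hasin2)).sub hsqrt4).add_const 1
  refine hsum.congr_deriv ?_
  have hhalf : √(1 - (x / 2) ^ 2) = √(4 - x ^ 2) / 2 := by
    rw [show 1 - (x / 2) ^ 2 = (4 - x ^ 2) / 2 ^ 2 by ring, sqrt_div' _ (by positivity),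
      sqrt_sq zero_le_two]
  have := sqrt_pos.2 h1x
  have := sqrt_pos.2 h4x
  simp only [arcsinGap, id, Function.comp, hhalf]
  field_simp
  ring

lemma hasDerivAt_arcsinGap_zero : HasDerivAt arcsinGap (1 / 2) 0 := by
  have hasin := hasDerivAt_arcsin (x := 0) (by norm_num) (by norm_num)
  have hasin2 := (hasDerivAt_arcsin (x := 0 / 2) (by norm_num) (by norm_num)).comp 0
    ((hasDerivAt_id (0 : ℝ)).div_const 2)
  exact (hasin.sub hasin2).congr_deriv (by norm_num)

lemma integral_arcsinGap {ρ : ℝ} (h₀ : 0 ≤ ρ) (h₁ : ρ ≤ 1) :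
    ∫ t in (0 : ℝ)..ρ, arcsinGap t = dCovSq ρ := by
  rw [integral_eq_sub_of_hasDerivAt_of_le h₀ continuous_dCovSq.continuousOn
    (fun x hx => hasDerivAt_dCovSq ⟨by linarith [hx.1], by linarith [hx.2]⟩)
    (continuous_arcsinGap.intervalIntegrable 0 ρ), dCovSq_zero, sub_zero]

lemma continuousOn_one_div_sqrt_one_sub_sq :
    ContinuousOn (fun x : ℝ => 1 / √(1 - x ^ 2)) (Ioo (-1) 1) :=
  continuousOn_const.div (by fun_prop) fun x hx =>
    (sqrt_pos.2 (by nlinarith [hx.1, hx.2])).ne'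

lemma arcsinGap_eq_mul_slope {t : ℝ} (h₀ : 0 ≤ t) (h₁ : t < 1) :
    arcsinGap t = t * arcsinGapSlope t := by
  have hmem : ∀ x ∈ uIcc (t / 2) t, x ∈ Ioo (-1 : ℝ) 1 := by
    intro x hx
    rw [uIcc_of_le (by linarith)] at hx
    exact ⟨by linarith [hx.1], hx.2.trans_lt h₁⟩
  rw [arcsinGapSlope, mul_integral_comp_mul_left (f := fun x => 1 / √(1 - x ^ 2)),
    mul_one_div, mul_one, integral_eq_sub_of_hasDerivAt, arcsinGap]
  · exact fun x hx => hasDerivAt_arcsin (hmem x hx).1.ne' (hmem x hx).2.ne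
  · exact (continuousOn_one_div_sqrt_one_sub_sq.mono hmem).intervalIntegrable

lemma arcsinGapSlope_zero : arcsinGapSlope 0 = 1 / 2 := by
  norm_num [arcsinGapSlope]

lemma monotoneOn_arcsinGapSlope : MonotoneOn arcsinGapSlope (Ico 0 1) := by
  intro s hs t ht hst
  have hmem : ∀ {r : ℝ}, r ∈ Ico (0 : ℝ) 1 → ∀ u ∈ uIcc (1 / 2 : ℝ) 1, r * u ∈ Ioo (-1 : ℝ) 1 := by
    intro r hr u hu
    rw [uIcc_of_le (by norm_num)] at hu
    constructor <;> nlinarith [hr.1, hr.2, hu.1, hu.2]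
  have hint : ∀ {r : ℝ}, r ∈ Ico (0 : ℝ) 1 →
      IntervalIntegrable (fun u => 1 / √(1 - (r * u) ^ 2)) MeasureTheory.volume (1 / 2) 1 :=
    fun hr => (continuousOn_one_div_sqrt_one_sub_sq.comp (by fun_prop) (hmem hr)).intervalIntegrable
  refine integral_mono_on (by norm_num) (hint hs) (hint ht) fun u hu => ?_
  have htu := hmem ht u (by rwa [uIcc_of_le (by norm_num)])
  have hsu : (s * u) ^ 2 ≤ (t * u) ^ 2 := by
    have hu₀ : 0 ≤ u := by linarith [hu.1]
    have : 0 ≤ s * u := mul_nonneg hs.1 hu₀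
    gcongr
  exact one_div_le_one_div_of_le (sqrt_pos.2 (by nlinarith [htu.1, htu.2])) (sqrt_le_sqrt (by linarith))

lemma half_le_arcsinGap {t : ℝ} (h₀ : 0 ≤ t) (h₁ : t < 1) : t / 2 ≤ arcsinGap t := by
  rw [arcsinGap_eq_mul_slope h₀ h₁, div_eq_mul_one_div, ← arcsinGapSlope_zero]
  exact mul_le_mul_of_nonneg_left
    (monotoneOn_arcsinGapSlope ⟨le_rfl, one_pos⟩ ⟨h₀, h₁⟩ h₀) h₀

lemma dCovSq_abs (ρ : ℝ) : dCovSq |ρ| = dCovSq ρ := by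
  rcases abs_choice ρ with h | h <;> rw [h]
  exact dCovSq_neg ρ

lemma abs_mul_arcsinGap_abs (ρ : ℝ) : |ρ| * arcsinGap |ρ| = ρ * arcsinGap ρ := by
  rcases abs_choice ρ with h | h <;> rw [h]
  rw [arcsinGap_neg, neg_mul_neg]

lemma sq_div_four_le_dCovSq {ρ : ℝ} (h : |ρ| ≤ 1) : ρ ^ 2 / 4 ≤ dCovSq ρ := by
  rw [← sq_abs, ← dCovSq_abs, ← integral_arcsinGap (abs_nonneg ρ) h]
  calc |ρ| ^ 2 / 4 = ∫ t in (0 : ℝ)..|ρ|, t / 2 := by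
        rw [intervalIntegral.integral_div, integral_id]; ring
    _ ≤ ∫ t in (0 : ℝ)..|ρ|, arcsinGap t :=
        integral_mono_on_of_le_Ioo (abs_nonneg ρ)
          ((continuous_id.div_const 2).intervalIntegrable _ _)
          (continuous_arcsinGap.intervalIntegrable _ _)
          fun t ht => half_le_arcsinGap ht.1.le (ht.2.trans_le h)

lemma two_mul_dCovSq_le {ρ : ℝ} (h : |ρ| < 1) : 2 * dCovSq ρ ≤ ρ * arcsinGap ρ := by
  rw [← dCovSq_abs, ← abs_mul_arcsinGap_abs, ← integral_arcsinGap (abs_nonneg ρ) h.le]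
  set r := |ρ|
  have hr₀ : 0 ≤ r := abs_nonneg ρ
  have hslope : ∀ t ∈ Icc 0 r, arcsinGap t ≤ t * arcsinGapSlope r := fun t ht => by
    rw [arcsinGap_eq_mul_slope ht.1 (ht.2.trans_lt h)]
    exact mul_le_mul_of_nonneg_left
      (monotoneOn_arcsinGapSlope ⟨ht.1, ht.2.trans_lt h⟩ ⟨hr₀, h⟩ ht.2) ht.1
  calc 2 * ∫ t in (0 : ℝ)..r, arcsinGap t ≤ 2 * ∫ t in (0 : ℝ)..r, t * arcsinGapSlope r :=
        mul_le_mul_of_nonneg_left (integral_mono_on hr₀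
          (continuous_arcsinGap.intervalIntegrable _ _)
          ((continuous_id.mul continuous_const).intervalIntegrable _ _) hslope) zero_le_two
    _ = r * arcsinGap r := by
        rw [arcsinGap_eq_mul_slope hr₀ h, intervalIntegral.integral_mul_const, integral_id]; ring

lemma monotoneOn_dCovSq_div_sq : MonotoneOn (fun ρ => dCovSq ρ / ρ ^ 2) (Ioc 0 1) := by
  have hderiv : ∀ x ∈ Ioo (0 : ℝ) 1, HasDerivAt (fun ρ => dCovSq ρ / ρ ^ 2)
      (x * (x * arcsinGap x - 2 * dCovSq x) / (x ^ 2) ^ 2) x := fun x hx =>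
    ((hasDerivAt_dCovSq ⟨by linarith [hx.1], hx.2⟩).div (hasDerivAt_pow 2 x)
      (pow_ne_zero 2 hx.1.ne')).congr_deriv (by push_cast; ring)
  refine monotoneOn_of_deriv_nonneg (convex_Ioc 0 1)
    (continuous_dCovSq.continuousOn.div (by fun_prop) fun x hx => pow_ne_zero 2 hx.1.ne') ?_ ?_
    <;> rw [interior_Ioc]
  · exact fun x hx => (hderiv x hx).differentiableAt.differentiableWithinAt
  · intro x hx
    rw [(hderiv x hx).deriv]
    have := two_mul_dCovSq_le (abs_lt.2 ⟨by linarith [hx.1], hx.2⟩)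
    exact div_nonneg (mul_nonneg hx.1.le (by linarith)) (by positivity)

lemma dCovSq_le_mul_sq {ρ : ℝ} (h : |ρ| ≤ 1) : dCovSq ρ ≤ dCovSq 1 * ρ ^ 2 := by
  rw [← sq_abs, ← dCovSq_abs]
  rcases (abs_nonneg ρ).eq_or_lt with h₀ | h₀
  · simp [← h₀, dCovSq_zero]
  · have := monotoneOn_dCovSq_div_sq ⟨h₀, h⟩ ⟨one_pos, le_rfl⟩ h
    simp only [one_pow, div_one] at this
    rwa [div_le_iff₀ (by positivity)] at this

lemma tendsto_dCovSq_div_sq : Tendsto (fun ρ => dCovSq ρ / ρ ^ 2) (𝓝[≠] 0) (𝓝 (1 / 4)) := by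
  have hslope := (hasDerivAt_iff_tendsto_slope.1 hasDerivAt_arcsinGap_zero).div_const 2
  have hsmall : ∀ᶠ ρ in 𝓝[≠] (0 : ℝ), ρ ≠ 0 ∧ |ρ| < 1 := by
    filter_upwards [self_mem_nhdsWithin,
      mem_nhdsWithin_of_mem_nhds (Ioo_mem_nhds (by norm_num : (-1 : ℝ) < 0) one_pos)]
      with ρ hρ hρ'
    exact ⟨hρ, abs_lt.2 hρ'⟩
  refine tendsto_of_tendsto_of_tendsto_of_le_of_le' tendsto_const_nhds
    (by convert hslope using 2; norm_num) ?_ ?_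
  · filter_upwards [hsmall] with ρ ⟨hρ, hρ'⟩
    rw [le_div_iff₀ (by positivity)]
    linarith [sq_div_four_le_dCovSq hρ'.le]
  · filter_upwards [hsmall] with ρ ⟨hρ, hρ'⟩
    have := two_mul_dCovSq_le hρ'
    rw [slope_def_field, show arcsinGap 0 = 0 by simp [arcsinGap], sub_zero, sub_zero,
      div_le_iff₀ (by positivity)]
    field_simp
    linarith

/-- For standard normal `X, Y` with correlation `ρ`, the distance correlation
`R(X,Y) = √(g(ρ)/(1+π/3-√3))` with
`g(ρ) = ρ arcsin ρ + √(1-ρ²) - ρ arcsin(ρ/2) - √(4-ρ²) + 1` satisfies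
`R(X,Y) ≤ |ρ|`; moreover `R(X,Y)/|ρ| → (1+π/3-√3)^{-1/2}/2` as `ρ → 0`, and this
limit is the infimum of `R(X,Y)/|ρ|` over `ρ ≠ 0`. -/
theorem dcor_bivariate_normal_bounds :
    let R : ℝ → ℝ := fun ρ => Real.sqrt
      ((ρ * Real.arcsin ρ + Real.sqrt (1 - ρ ^ 2) - ρ * Real.arcsin (ρ / 2)
          - Real.sqrt (4 - ρ ^ 2) + 1) / (1 + Real.pi / 3 - Real.sqrt 3))
    (∀ ρ ∈ Set.Icc (-1 : ℝ) 1, R ρ ≤ |ρ|) ∧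
    Tendsto (fun ρ => R ρ / |ρ|) (nhdsWithin 0 {(0 : ℝ)}ᶜ)
      (nhds (1 / (2 * Real.sqrt (1 + Real.pi / 3 - Real.sqrt 3)))) ∧
    IsGLB {r : ℝ | ∃ ρ ∈ Set.Icc (-1 : ℝ) 1, ρ ≠ 0 ∧ r = R ρ / |ρ|}
      (1 / (2 * Real.sqrt (1 + Real.pi / 3 - Real.sqrt 3))) := by
  intro R
  set c := 1 + π / 3 - √3
  have hc₁ : dCovSq 1 = c := dCovSq_one
  have hc : 0 < c := by
    rw [← hc₁]
    linarith [sq_div_four_le_dCovSq (ρ := 1) (by norm_num)]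
  have hratio (ρ : ℝ) : R ρ / |ρ| = √(dCovSq ρ / ρ ^ 2 / c) := by
    rw [div_right_comm, sqrt_div' _ (sq_nonneg ρ), sqrt_sq_eq_abs]; rfl
  have hlimit : 1 / (2 * √c) = √(1 / 4 / c) := by
    rw [sqrt_div' _ hc.le, show (1 / 4 : ℝ) = (1 / 2) ^ 2 by norm_num,
      sqrt_sq (by norm_num), div_div]
  have htendsto : Tendsto (fun ρ => R ρ / |ρ|) (𝓝[≠] 0) (𝓝 (1 / (2 * √c))) := by
    simpa only [hratio, hlimit] using (tendsto_dCovSq_div_sq.div_const c).sqrt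
  refine ⟨fun ρ hρ => ?_, htendsto, ?_, fun b hb => ?_⟩
  · rw [← sqrt_sq_eq_abs]
    refine sqrt_le_sqrt ((div_le_iff₀ hc).2 ?_)
    change dCovSq ρ ≤ ρ ^ 2 * c
    linarith [hc₁ ▸ dCovSq_le_mul_sq (abs_le.2 hρ)]
  · rintro _ ⟨ρ, hρ, hρ₀, rfl⟩
    rw [hratio, hlimit]
    refine sqrt_le_sqrt (div_le_div_of_nonneg_right ?_ hc.le)
    rw [le_div_iff₀ (by positivity)]
    linarith [sq_div_four_le_dCovSq (abs_le.2 hρ)]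
  · refine ge_of_tendsto htendsto ?_
    filter_upwards [self_mem_nhdsWithin,
      mem_nhdsWithin_of_mem_nhds (Icc_mem_nhds (by norm_num : (-1 : ℝ) < 0) one_pos)]
      with ρ hρ₀ hρ
    exact hb ⟨ρ, hρ, hρ₀, rfl⟩
end
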